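/- arXiv:2403.07628 — 6 statements merged into one kernel-verified Lean document; each statement's English description precedes it below -/
import Mathlib

section
/- Fix real numbers γ > 0, c_μ, c_σ, and let μ, σ : ℝ → ℝ be functions such that μ(α) − α/γ → c_μ and σ(α) − √(2α/γ) → c_σ as α → +∞. Writing ξ_α(x) = μ(α) + σ(α)·x, the functions x ↦ (γe/α)^α · ξ_α(x)^α · e^{−γ ξ_α(x)} converge locally uniformly on ℝ, as α → +∞, to x ↦ e^{−γ x²}. (For each compact set of x the argument ξ_α(x) is eventually positive, so the power ξ_α(x)^α is eventually well defined.) -/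
open Filter

lemma log_taylor2 (u : ℝ) (h : |u| ≤ 1/2) : |Real.log (1+u) - u + u^2/2| ≤ 2*|u|^3 := by
  have h1 : |(-u)| < 1 := by rw [abs_neg]; linarith
  have H := Real.abs_log_sub_add_sum_range_le h1 2
  simp [Finset.sum_range_succ] at H
  have e1 : -u + u ^ 2 / (1+1) + Real.log (1 + u) = Real.log (1+u) - u + u^2/2 := by ring_nf
  rw [e1] at H
  calc |Real.log (1+u) - u + u^2/2| ≤ |u|^3 / (1 - |u|) := H
    _ ≤ 2*|u|^3 := by
        rw [div_le_iff₀ (by linarith)]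
        nlinarith [abs_nonneg u, pow_nonneg (abs_nonneg u) 3]

set_option maxHeartbeats 1000000 in
/-- Locally uniform convergence of `(γe/α)^α · ξ_α(x)^α · e^{−γξ_α(x)}` to `e^{−γx²}`,
where `ξ_α(x) = μ(α) + σ(α)x`, as `α → +∞` (powers are real powers). -/
theorem stmt2 (γ cμ cσ : ℝ) (hγ : 0 < γ) (μ σ : ℝ → ℝ)
    (hμ : Tendsto (fun α => μ α - α / γ) atTop (nhds cμ))
    (hσ : Tendsto (fun α => σ α - Real.sqrt (2 * α / γ)) atTop (nhds cσ)) :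
    TendstoLocallyUniformly
      (fun α (x : ℝ) =>
        (γ * Real.exp 1 / α) ^ α * (μ α + σ α * x) ^ α *
          Real.exp (-γ * (μ α + σ α * x)))
      (fun x => Real.exp (-γ * x ^ 2)) atTop := by
  rw [tendstoLocallyUniformly_iff_forall_isCompact]
  intro K hK
  rw [Metric.tendstoUniformlyOn_iff]
  intro ε hε
  -- Bound the compact set
  obtain ⟨R, hR1, hRK⟩ : ∃ R : ℝ, 1 ≤ R ∧ ∀ x ∈ K, |x| ≤ R := by
    obtain ⟨r, hr⟩ := hK.isBounded.subset_closedBall 0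
    refine ⟨max 1 r, le_max_left _ _, fun x hx => ?_⟩
    have := hr hx
    rw [Metric.mem_closedBall, Real.dist_eq, sub_zero] at this
    exact this.trans (le_max_right _ _)
  have hR0 : (0:ℝ) < R := by linarith
  -- eventual bounds on perturbations
  obtain ⟨C, hC0, hmb, hsb⟩ : ∃ C : ℝ, 0 < C ∧ (∀ᶠ α in atTop, |μ α - α/γ| ≤ C) ∧
      (∀ᶠ α in atTop, |σ α - Real.sqrt (2*α/γ)| ≤ C) := by
    refine ⟨max |cμ| |cσ| + 1, by positivity, ?_, ?_⟩
    · filter_upwards [(Metric.tendsto_nhds.mp hμ) 1 one_pos] with a ha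
      rw [Real.dist_eq] at ha
      have h1 : |μ a - a/γ| - |cμ| ≤ |μ a - a/γ - cμ| := abs_sub_abs_le_abs_sub _ _
      have h2 : |cμ| ≤ max |cμ| |cσ| := le_max_left _ _
      linarith
    · filter_upwards [(Metric.tendsto_nhds.mp hσ) 1 one_pos] with a ha
      rw [Real.dist_eq] at ha
      have h1 : |σ a - Real.sqrt (2*a/γ)| - |cσ| ≤ |σ a - Real.sqrt (2*a/γ) - cσ| :=
        abs_sub_abs_le_abs_sub _ _
      have h2 : |cσ| ≤ max |cμ| |cσ| := le_max_right _ _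
      linarith
  obtain ⟨W, hWdef⟩ : ∃ z : ℝ, z = γ * C * (1 + R) := ⟨_, rfl⟩
  have hW0 : 0 < W := by rw [hWdef]; positivity
  obtain ⟨P, hPdef⟩ : ∃ z : ℝ, z = Real.sqrt (2*γ) * R + 1 := ⟨_, rfl⟩
  have hsq2γ : 0 ≤ Real.sqrt (2*γ) := Real.sqrt_nonneg _
  have hP1 : (1:ℝ) ≤ P := by
    have : 0 ≤ Real.sqrt (2*γ) * R := mul_nonneg hsq2γ hR0.le
    rw [hPdef]; linarith
  obtain ⟨D, hDdef⟩ : ∃ z : ℝ, z = Real.sqrt (2*γ)*R*W + W^2/2 + 2*P^3 := ⟨_, rfl⟩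
  have hD0 : 0 < D := by
    have h1 : 0 ≤ Real.sqrt (2*γ)*R*W := mul_nonneg (mul_nonneg hsq2γ hR0.le) hW0.le
    have h2 : 0 < P^3 := pow_pos (by linarith) 3
    have h3 : 0 ≤ W^2/2 := by positivity
    rw [hDdef]; linarith
  obtain ⟨A, hAdef⟩ : ∃ z : ℝ, z = max (max 1 (W^2)) (max ((2*P)^2) (max (D^2) ((2*D/ε+1)^2))) := ⟨_, rfl⟩
  filter_upwards [hmb, hsb, eventually_ge_atTop A] with α hm hs hA
  rw [hAdef] at hA
  -- basic facts about α
  have hα1 : (1:ℝ) ≤ α := le_trans (le_trans (le_max_left _ _) (le_max_left _ _)) hA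
  have hα0 : (0:ℝ) < α := by linarith
  obtain ⟨s, hsdef⟩ : ∃ z : ℝ, z = Real.sqrt α := ⟨_, rfl⟩
  have hsa : s * s = α := by rw [hsdef]; exact Real.mul_self_sqrt hα0.le
  have hs0 : 0 < s := by rw [hsdef]; exact Real.sqrt_pos.mpr hα0
  have hs1 : (1:ℝ) ≤ s := by
    rw [hsdef, show (1:ℝ) = Real.sqrt 1 from (Real.sqrt_one).symm]
    exact Real.sqrt_le_sqrt hα1
  have sqrt_of_sq : ∀ c : ℝ, 0 ≤ c → c^2 ≤ α → c ≤ s := by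
    intro c hc hcα
    rw [hsdef]
    exact (Real.le_sqrt hc hα0.le).mpr hcα
  have hsW : W ≤ s := sqrt_of_sq W hW0.le
    (le_trans (le_trans (le_max_right _ _) (le_max_left _ _)) hA)
  have hsP : 2*P ≤ s := sqrt_of_sq (2*P) (by linarith)
    (le_trans (le_trans (le_max_left _ _) (le_max_right _ _)) hA)
  have hsD : D ≤ s := sqrt_of_sq D hD0.le
    (le_trans (le_trans (le_trans (le_max_left _ _) (le_max_right _ _)) (le_max_right _ _)) hA)
  have hsE : 2*D/ε + 1 ≤ s := sqrt_of_sq _ (by positivity)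
    (le_trans (le_trans (le_trans (le_max_right _ _) (le_max_right _ _)) (le_max_right _ _)) hA)
  -- the key sqrt identity
  have e2 : γ * Real.sqrt (2*α/γ) = Real.sqrt (2*γ) * s := by
    rw [hsdef, ← Real.sqrt_mul (by positivity) α,
      show γ = Real.sqrt (γ^2) from (Real.sqrt_sq hγ.le).symm,
      ← Real.sqrt_mul (by positivity)]
    congr 1
    field_simp
    rw [Real.sq_sqrt (sq_nonneg γ)]
  intro x hx
  have hxR := hRK x hx
  obtain ⟨v, hvdef⟩ : ∃ z : ℝ, z = Real.sqrt (2*γ) * s * x := ⟨_, rfl⟩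
  obtain ⟨w, hwdef⟩ : ∃ z : ℝ, z = γ*((μ α - α/γ) + (σ α - Real.sqrt (2*α/γ))*x) := ⟨_, rfl⟩
  have hαγ : γ * (α/γ) = α := by field_simp
  have hξ : γ * (μ α + σ α * x) = α + (v + w) := by
    rw [hvdef, hwdef]
    linear_combination x * e2 + hαγ
  -- bounds
  have hv : |v| ≤ Real.sqrt (2*γ) * R * s := by
    rw [hvdef, abs_mul, abs_mul, abs_of_nonneg hsq2γ, abs_of_nonneg hs0.le]
    have h0 : 0 ≤ Real.sqrt (2*γ) * s := mul_nonneg hsq2γ hs0.le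
    calc Real.sqrt (2*γ) * s * |x| ≤ Real.sqrt (2*γ) * s * R := mul_le_mul_of_nonneg_left hxR h0
      _ = Real.sqrt (2*γ) * R * s := by ring
  have hw : |w| ≤ W := by
    rw [hwdef, abs_mul, abs_of_nonneg hγ.le]
    calc γ * |μ α - α/γ + (σ α - Real.sqrt (2*α/γ))*x|
        ≤ γ * (|μ α - α/γ| + |σ α - Real.sqrt (2*α/γ)| * |x|) := by
          rw [← abs_mul]
          exact mul_le_mul_of_nonneg_left (abs_add_le _ _) hγ.le
      _ ≤ γ * (C + C*R) := by
          have h1 : |σ α - Real.sqrt (2*α/γ)| * |x| ≤ C*R :=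
            mul_le_mul hs hxR (abs_nonneg _) hC0.le
          exact mul_le_mul_of_nonneg_left (by linarith only [h1, hm]) hγ.le
      _ = W := by rw [hWdef]; ring
  have hvw : |v + w| ≤ P * s := by
    calc |v + w| ≤ |v| + |w| := abs_add_le _ _
      _ ≤ Real.sqrt (2*γ) * R * s + s := by linarith only [hv, hw, hsW]
      _ = P * s := by rw [hPdef]; ring
  have hPs : P * s ≤ α/2 := by
    have := mul_le_mul_of_nonneg_right hsP hs0.le
    rw [hsa] at this
    linarith only [this]
  have hpos : 0 < α + (v + w) := by
    have h2 := neg_abs_le (v + w)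
    have h3 := hvw.trans hPs
    linarith only [h2, h3, hα0]
  have hξpos : 0 < μ α + σ α * x := by
    have heq : μ α + σ α * x = (α + (v + w))/γ := by
      rw [eq_div_iff hγ.ne']
      linear_combination hξ
    rw [heq]
    exact div_pos hpos hγ
  -- the exponent
  obtain ⟨u, hudef⟩ : ∃ z : ℝ, z = (v + w)/α := ⟨_, rfl⟩
  have hau : α * u = v + w := by rw [hudef]; field_simp
  have h1u : 1 + u = γ * (μ α + σ α * x) / α := by
    rw [hξ, hudef]; field_simp
  have h1upos : 0 < 1 + u := by
    rw [h1u]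
    exact div_pos (mul_pos hγ hξpos) hα0
  have hfeq : (γ * Real.exp 1 / α) ^ α * (μ α + σ α * x) ^ α *
      Real.exp (-γ * (μ α + σ α * x)) = Real.exp (α * Real.log (1+u) - α * u) := by
    rw [Real.rpow_def_of_pos (div_pos (mul_pos hγ (Real.exp_pos 1)) hα0),
      Real.rpow_def_of_pos hξpos, ← Real.exp_add, ← Real.exp_add]
    congr 1
    have hlogb : Real.log (γ * Real.exp 1 / α) = Real.log γ + 1 - Real.log α := by
      rw [Real.log_div (mul_pos hγ (Real.exp_pos 1)).ne' hα0.ne',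
        Real.log_mul hγ.ne' (Real.exp_pos 1).ne', Real.log_exp]
    have hlog : Real.log (1+u) = Real.log γ + Real.log (μ α + σ α * x) - Real.log α := by
      rw [h1u, Real.log_div (mul_pos hγ hξpos).ne' hα0.ne', Real.log_mul hγ.ne' hξpos.ne']
    rw [hlogb, hlog]
    linear_combination hau - hξ
  -- estimate the exponent
  have hu : |u| * s ≤ P := by
    have h1 : |u| = |v + w| / α := by rw [hudef, abs_div, abs_of_nonneg hα0.le]
    rw [h1, div_mul_eq_mul_div, div_le_iff₀ hα0]
    calc |v + w| * s ≤ (P * s) * s := mul_le_mul_of_nonneg_right hvw hs0.le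
      _ = P * α := by rw [mul_assoc, hsa]
  have hu2 : |u| ≤ 1/2 := by
    rw [← mul_le_mul_iff_of_pos_right hs0]
    calc |u| * s ≤ P := hu
      _ ≤ 1/2 * s := by linarith only [hsP]
  obtain ⟨L, hLdef⟩ : ∃ z : ℝ, z = Real.log (1+u) - u + u^2/2 := ⟨_, rfl⟩
  have hL : |L| ≤ 2*|u|^3 := by rw [hLdef]; exact log_taylor2 u hu2
  obtain ⟨T, hTdef⟩ : ∃ z : ℝ, z = α*u^2/2 - γ*x^2 := ⟨_, rfl⟩
  have hvsq : v^2 = 2*γ*α*x^2 := by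
    have h1 : Real.sqrt (2*γ)^2 = 2*γ := Real.sq_sqrt (by positivity)
    rw [hvdef]
    linear_combination (s*x)^2*h1 + 2*γ*x^2*hsa
  have hq : T * (2*α) = 2*v*w + w^2 := by
    have h2 : (α*u)^2 = (v+w)^2 := by rw [hau]
    rw [hTdef]
    linear_combination h2 + hvsq
  -- bound |T| * s
  have hTs : |T| * s ≤ Real.sqrt (2*γ)*R*W + W^2/2 := by
    have hTabs : |T| * (2*α) ≤ 2*(Real.sqrt (2*γ)*R*s)*W + W^2 := by
      have e3 : |T| * (2*α) = |2*v*w + w^2| := by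
        rw [← hq, abs_mul, abs_of_nonneg (by linarith only [hα0] : (0:ℝ) ≤ 2*α)]
      rw [e3]
      have a1 : |v| * |w| ≤ (Real.sqrt (2*γ)*R*s)*W :=
        mul_le_mul hv hw (abs_nonneg _) (mul_nonneg (mul_nonneg hsq2γ hR0.le) hs0.le)
      have a2 : w^2 ≤ W^2 := by
        have h4 := pow_le_pow_left₀ (abs_nonneg w) hw 2
        rwa [sq_abs] at h4
      calc |2*v*w + w^2| ≤ |2*v*w| + |w^2| := abs_add_le _ _
        _ = 2 * (|v| * |w|) + w^2 := by
            rw [abs_mul, abs_mul, abs_two, abs_pow, sq_abs, mul_assoc]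
        _ ≤ 2*(Real.sqrt (2*γ)*R*s)*W + W^2 := by linarith only [a1, a2]
    have key : (|T| * s)*(2*s) ≤ (Real.sqrt (2*γ)*R*W + W^2/2)*(2*s) := by
      have e4 : (|T| * s)*(2*s) = |T| * (2*α) := by rw [← hsa]; ring
      rw [e4]
      have h5 : W^2 ≤ W^2*s := le_mul_of_one_le_right (sq_nonneg W) hs1
      calc |T| * (2*α) ≤ 2*(Real.sqrt (2*γ)*R*s)*W + W^2 := hTabs
        _ ≤ 2*(Real.sqrt (2*γ)*R*s)*W + W^2*s := by linarith only [h5]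
        _ = (Real.sqrt (2*γ)*R*W + W^2/2)*(2*s) := by ring
    exact le_of_mul_le_mul_right key (by linarith only [hs0])
  -- bound (α*|L|) * s
  have hLs : (α * |L|) * s ≤ 2*P^3 := by
    have h3 : (|u| * s)^3 ≤ P^3 :=
      pow_le_pow_left₀ (mul_nonneg (abs_nonneg u) hs0.le) hu 3
    calc (α * |L|) * s ≤ (α * (2*|u|^3)) * s :=
          mul_le_mul_of_nonneg_right (mul_le_mul_of_nonneg_left hL hα0.le) hs0.le
      _ = 2 * (|u| * s)^3 := by rw [← hsa]; ring
      _ ≤ 2*P^3 := by linarith only [h3]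
  -- assemble
  obtain ⟨rr, hrrdef⟩ : ∃ z : ℝ, z = α * Real.log (1+u) - α * u - (-γ * x^2) := ⟨_, rfl⟩
  have hrid : rr = α * L - T := by
    rw [hrrdef, hLdef, hTdef]; ring
  have hrs : |rr| * s ≤ D := by
    have h1 : |rr| ≤ α * |L| + |T| := by
      rw [hrid]
      calc |α * L - T| ≤ |α * L| + |T| := abs_sub _ _
        _ = α * |L| + |T| := by rw [abs_mul, abs_of_nonneg hα0.le]
    calc |rr| * s ≤ (α * |L| + |T|) * s := mul_le_mul_of_nonneg_right h1 hs0.le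
      _ = (α * |L|) * s + |T| * s := by ring
      _ ≤ 2*P^3 + (Real.sqrt (2*γ)*R*W + W^2/2) := by linarith only [hLs, hTs]
      _ = D := by rw [hDdef]; ring
  have hrr1 : |rr| ≤ 1 := by
    have h1 : |rr| * s ≤ 1 * s := by linarith only [hrs, hsD, hs0]
    exact le_of_mul_le_mul_right h1 hs0
  have hrrε : 2 * |rr| < ε := by
    have h2 := mul_le_mul_of_nonneg_left hsE hε.le
    have h3 : ε * (2*D/ε) = 2*D := by field_simp
    have h4 : 2*D < ε * s := by linarith only [h2, h3, hε]
    have h5 : (2 * |rr|) * s < (ε) * s := by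
      calc (2 * |rr|) * s = 2 * (|rr| * s) := by ring
        _ ≤ 2 * D := by linarith only [hrs]
        _ < ε * s := h4
    exact lt_of_mul_lt_mul_right h5 hs0.le
  -- final
  rw [hfeq, Real.dist_eq]
  have hexp : α * Real.log (1+u) - α * u = -γ * x^2 + rr := by rw [hrrdef]; ring
  rw [hexp, Real.exp_add]
  have hfac : Real.exp (-γ*x^2) - Real.exp (-γ*x^2) * Real.exp rr
      = Real.exp (-γ*x^2) * (1 - Real.exp rr) := by ring
  rw [hfac, abs_mul, abs_of_nonneg (Real.exp_nonneg _)]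
  have hle1 : Real.exp (-γ*x^2) ≤ 1 := by
    rw [Real.exp_le_one_iff]
    have h6 : 0 ≤ γ * x^2 := mul_nonneg hγ.le (sq_nonneg x)
    linarith only [h6]
  have habs : |1 - Real.exp rr| ≤ 2*|rr| := by
    rw [abs_sub_comm]
    exact Real.abs_exp_sub_one_le hrr1
  calc Real.exp (-γ*x^2) * |1 - Real.exp rr| ≤ 1 * (2*|rr|) :=
        mul_le_mul hle1 habs (abs_nonneg _) zero_le_one
    _ < ε := by linarith only [hrrε]
end

section
/- Fix real numbers γ > 0, β > 0, an integer k ≥ 0, and a real constant c_σ, and let σ : ℝ → ℝ satisfy σ(α) − √(2α/γ) → c_σ as α → +∞. Then σ(α) · (2α/γ)^{kβ/2} · (α/e)^α · γ^{1+kβ} / Γ(α + 1 + kβ/2) → (2γ)^{(1+kβ)/2} / √(2π) as α → +∞. -/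
open Filter
open Real

lemma tendsto_a :
    Tendsto (fun n : ℕ => Real.log n.factorial + n - ((n : ℝ) + 1/2) * Real.log n)
      atTop (nhds (Real.log (Real.sqrt (2 * π)))) := by
  have h1 : Tendsto (fun n : ℕ => Real.log (Stirling.stirlingSeq n) + 1/2 * Real.log 2)
      atTop (nhds (Real.log (Real.sqrt π) + 1/2 * Real.log 2)) :=
    ((Real.continuousAt_log (by positivity)).tendsto.comp
      Stirling.tendsto_stirlingSeq_sqrt_pi).add tendsto_const_nhds
  have heq : Real.log (Real.sqrt π) + 1/2 * Real.log 2 = Real.log (Real.sqrt (2*π)) := by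
    rw [Real.log_sqrt pi_pos.le, Real.log_sqrt (by positivity),
      Real.log_mul two_ne_zero pi_pos.ne']
    ring
  rw [← heq]
  apply h1.congr'
  filter_upwards [eventually_ge_atTop 1] with n hn
  have hn0 : (0:ℝ) < n := by exact_mod_cast hn
  rw [Stirling.log_stirlingSeq_formula n, Real.log_mul two_ne_zero hn0.ne',
    Real.log_div hn0.ne' (Real.exp_ne_zero 1), Real.log_exp]
  ring

lemma gamma_bounds {x : ℝ} (hx : 2 ≤ x) :
    Real.log (⌊x⌋₊).factorial + (x - ⌊x⌋₊) * Real.log ⌊x⌋₊ ≤ Real.log (Real.Gamma (x+1)) ∧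
    Real.log (Real.Gamma (x+1)) ≤
      Real.log (⌊x⌋₊).factorial + (x - ⌊x⌋₊) * Real.log (⌊x⌋₊ + 1) := by
  set n : ℕ := ⌊x⌋₊ with hn
  have hx0 : (0:ℝ) < x := by linarith
  have hn2 : 2 ≤ n := Nat.le_floor (by exact_mod_cast hx)
  have hn1 : (1:ℝ) ≤ (n:ℝ) := by exact_mod_cast Nat.one_le_of_lt hn2
  have hnx : (n:ℝ) ≤ x := Nat.floor_le hx0.le
  have hxn : x < n + 1 := Nat.lt_floor_add_one x
  set t : ℝ := x - n with ht
  have ht0 : 0 ≤ t := by simp [ht]; linarith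
  have ht1 : t < 1 := by simp [ht]; linarith
  have hfact : Real.Gamma ((n:ℝ) + 1) = n.factorial := Real.Gamma_nat_eq_factorial n
  have hfact2 : Real.Gamma ((n:ℝ) + 2) = (n+1).factorial := by
    have := Real.Gamma_nat_eq_factorial (n+1)
    rw [show ((n:ℝ)+2) = ((n+1:ℕ):ℝ) + 1 by push_cast; ring, this]
  have hlogfact2 : Real.log ((n+1).factorial : ℝ) = Real.log (n+1 : ℝ) + Real.log (n.factorial : ℝ) := by
    rw [Nat.factorial_succ]
    push_cast
    rw [Real.log_mul (by positivity) (by positivity)]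
  have hgamman : Real.log (Real.Gamma (n:ℝ)) = Real.log (n.factorial : ℝ) - Real.log (n:ℝ) := by
    have h := Real.Gamma_add_one (s := (n:ℝ)) (by positivity)
    rw [hfact] at h
    have hΓ : Real.Gamma (n:ℝ) = (n.factorial : ℝ) / n := by
      field_simp at h ⊢; linarith [h]
    rw [hΓ, Real.log_div (by positivity) (by positivity)]
  constructor
  · -- lower bound
    have key := Real.convexOn_log_Gamma.2 (Set.mem_Ioi.mpr (by positivity : (0:ℝ) < (n:ℝ)))
      (Set.mem_Ioi.mpr (by positivity : (0:ℝ) < x + 1))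
      (by positivity : (0:ℝ) ≤ t/(1+t)) (by positivity : (0:ℝ) ≤ 1/(1+t))
      (by field_simp; ring)
    have hpt : (t/(1+t)) • (n:ℝ) + (1/(1+t)) • (x+1) = (n:ℝ) + 1 := by
      simp only [smul_eq_mul]
      have : x = n + t := by simp [ht]
      field_simp [this]
      ring
    rw [hpt] at key
    simp only [Function.comp_apply, smul_eq_mul] at key
    rw [hfact, hgamman] at key
    have h1t : (0:ℝ) < 1 + t := by linarith
    -- multiply key by (1+t)
    have key2 := mul_le_mul_of_nonneg_left key h1t.le
    rw [mul_add] at key2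
    field_simp at key2
    nlinarith [key2]
  · -- upper bound
    have key := Real.convexOn_log_Gamma.2 (Set.mem_Ioi.mpr (by positivity : (0:ℝ) < (n:ℝ)+1))
      (Set.mem_Ioi.mpr (by positivity : (0:ℝ) < (n:ℝ)+2))
      (by linarith : (0:ℝ) ≤ 1 - t) ht0 (by ring)
    have hpt : (1-t) • ((n:ℝ)+1) + t • ((n:ℝ)+2) = x + 1 := by
      simp only [smul_eq_mul]; have : x = n + t := by simp [ht]
      rw [this]; ring
    rw [hpt] at key
    simp only [Function.comp_apply, smul_eq_mul] at key
    rw [hfact, hfact2, hlogfact2] at key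
    push_cast at key ⊢
    nlinarith [key]

noncomputable def rr (x : ℝ) : ℝ := (x - ⌊x⌋₊) + (x + 1/2) * Real.log (⌊x⌋₊ / x)

lemma tendsto_rr : Tendsto rr atTop (nhds 0) := by
  apply squeeze_zero_norm' (a := fun x : ℝ => 5 / x)
  · filter_upwards [eventually_ge_atTop 2] with x hx
    set n : ℕ := ⌊x⌋₊ with hn
    have hx0 : (0:ℝ) < x := by linarith
    have hn2 : 2 ≤ n := Nat.le_floor (by exact_mod_cast hx)
    have hn1 : (1:ℝ) ≤ (n:ℝ) := by exact_mod_cast Nat.one_le_of_lt hn2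
    have hnx : (n:ℝ) ≤ x := Nat.floor_le hx0.le
    have hxn : x < n + 1 := Nat.lt_floor_add_one x
    set t : ℝ := x - n with ht
    have ht0 : 0 ≤ t := by simp [ht]; linarith
    have ht1 : t < 1 := by simp [ht]; linarith
    set u : ℝ := t / x with hu
    have hu0 : 0 ≤ u := by positivity
    have hu2 : u ≤ 1/2 := by rw [hu, div_le_iff₀ hx0]; linarith
    have hndiv : (n:ℝ)/x = 1 - u := by rw [hu, ht]; field_simp; ring
    have h1u : (0:ℝ) < 1 - u := by linarith
    -- log bounds
    have hlogup : Real.log (1 - u) ≤ -u := by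
      have := Real.log_le_sub_one_of_pos h1u
      linarith
    have hloglow : -u - 2*u^2 ≤ Real.log (1 - u) := by
      have h2 : Real.log (1-u)⁻¹ ≤ (1-u)⁻¹ - 1 := Real.log_le_sub_one_of_pos (by positivity)
      rw [Real.log_inv] at h2
      have h3 : (1-u)⁻¹ - 1 = u / (1-u) := by field_simp; ring
      have h4 : u / (1-u) ≤ u + 2*u^2 := by
        rw [div_le_iff₀ h1u]; nlinarith
      linarith
    rw [Real.norm_eq_abs, abs_le]
    have hur : u * x = t := by rw [hu]; field_simp
    constructor
    · have : (x + 1/2) * Real.log ((n:ℝ)/x) ≥ (x + 1/2) * (-u - 2*u^2) := by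
        apply mul_le_mul_of_nonneg_left _ (by linarith)
        rw [hndiv]; exact hloglow
      have hrr : rr x = t + (x + 1/2) * Real.log ((n:ℝ)/x) := rfl
      rw [hrr]
      have hux : u ≤ 1/x := by rw [hu, div_le_div_iff₀ hx0 hx0]; nlinarith
      have hq2 : u^2*x ≤ u := by nlinarith [mul_le_mul_of_nonneg_left ht1.le hu0]
      have hq3 : u^2 ≤ u := by nlinarith
      have h5 : 5/x = 5*(1/x) := by ring
      have h1x : (0:ℝ) < 1/x := by positivity
      have hexp : (x+1/2)*(-u - 2*u^2) = -(u*x) - u/2 - 2*(u^2*x) - u^2 := by ring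
      rw [h5]
      linarith [this, hexp, hur, hq2, hq3, hux, h1x]
    · have : (x + 1/2) * Real.log ((n:ℝ)/x) ≤ (x + 1/2) * (-u) := by
        apply mul_le_mul_of_nonneg_left _ (by linarith)
        rw [hndiv]; exact hlogup
      have hrr : rr x = t + (x + 1/2) * Real.log ((n:ℝ)/x) := rfl
      rw [hrr]
      have h5 : (0:ℝ) < 5/x := by positivity
      nlinarith [this, hur, h5, hu0]
  · have : Tendsto (fun x : ℝ => 5 / x) atTop (nhds 0) :=
      Tendsto.div_atTop tendsto_const_nhds tendsto_id
    exact this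



noncomputable def aseq (n : ℕ) : ℝ := Real.log n.factorial + n - ((n : ℝ) + 1/2) * Real.log n

lemma tendsto_log_stirling :
    Tendsto (fun x : ℝ => Real.log (Real.Gamma (x+1)) + x - (x + 1/2) * Real.log x)
      atTop (nhds (Real.log (Real.sqrt (2*π)))) := by
  have hlo : Tendsto (fun x : ℝ => aseq ⌊x⌋₊ + rr x) atTop (nhds (Real.log (Real.sqrt (2*π)))) := by
    have := (tendsto_a.comp tendsto_nat_floor_atTop).add tendsto_rr
    simpa [aseq] using this
  have herr : Tendsto (fun x : ℝ => (x - ⌊x⌋₊) * Real.log (1 + 1/(⌊x⌋₊:ℝ))) atTop (nhds 0) := by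
    apply squeeze_zero_norm' (a := fun x : ℝ => 2 / x)
    · filter_upwards [eventually_ge_atTop 2] with x hx
      have hx0 : (0:ℝ) < x := by linarith
      have hn2 : 2 ≤ ⌊x⌋₊ := Nat.le_floor (by exact_mod_cast hx)
      have hn1 : (1:ℝ) ≤ (⌊x⌋₊:ℝ) := by exact_mod_cast Nat.one_le_of_lt hn2
      have hnx : (⌊x⌋₊:ℝ) ≤ x := Nat.floor_le hx0.le
      have hxn : x < ⌊x⌋₊ + 1 := Nat.lt_floor_add_one x
      have hl0 : 0 ≤ Real.log (1 + 1/(⌊x⌋₊:ℝ)) := Real.log_nonneg (le_add_of_nonneg_right (by positivity))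
      have hl1 : Real.log (1 + 1/(⌊x⌋₊:ℝ)) ≤ 1/(⌊x⌋₊:ℝ) := by
        have := Real.log_le_sub_one_of_pos (show (0:ℝ) < 1 + 1/(⌊x⌋₊:ℝ) by positivity)
        linarith
      have hinv : 1/(⌊x⌋₊:ℝ) ≤ 2/x := by
        rw [div_le_div_iff₀ (by linarith) hx0]; linarith
      rw [Real.norm_eq_abs, abs_le]
      constructor
      · have h2 : (0:ℝ) < 2/x := by positivity
        nlinarith
      · nlinarith
    · exact Tendsto.div_atTop tendsto_const_nhds tendsto_id
  have hhi : Tendsto (fun x : ℝ => aseq ⌊x⌋₊ + rr x + (x - ⌊x⌋₊) * Real.log (1 + 1/(⌊x⌋₊:ℝ)))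
      atTop (nhds (Real.log (Real.sqrt (2*π)))) := by
    simpa using hlo.add herr
  refine tendsto_of_tendsto_of_tendsto_of_le_of_le' hlo hhi ?_ ?_
  · filter_upwards [eventually_ge_atTop 2] with x hx
    have hx0 : (0:ℝ) < x := by linarith
    have hn2 : 2 ≤ ⌊x⌋₊ := Nat.le_floor (by exact_mod_cast hx)
    have hn1 : (1:ℝ) ≤ (⌊x⌋₊:ℝ) := by exact_mod_cast Nat.one_le_of_lt hn2
    have hnx : (⌊x⌋₊:ℝ) ≤ x := Nat.floor_le hx0.le
    have hxn : x < ⌊x⌋₊ + 1 := Nat.lt_floor_add_one x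
    have hlog : Real.log ((⌊x⌋₊:ℝ)/x) = Real.log (⌊x⌋₊:ℝ) - Real.log x :=
      Real.log_div (by positivity) hx0.ne'
    have hb := (gamma_bounds hx).1
    have hrw : rr x = (x - ⌊x⌋₊) + (x + 1/2) * (Real.log (⌊x⌋₊:ℝ) - Real.log x) := by
      rw [rr, hlog]
    rw [aseq, hrw]
    nlinarith [hb]
  · filter_upwards [eventually_ge_atTop 2] with x hx
    have hx0 : (0:ℝ) < x := by linarith
    have hn2 : 2 ≤ ⌊x⌋₊ := Nat.le_floor (by exact_mod_cast hx)
    have hn1 : (1:ℝ) ≤ (⌊x⌋₊:ℝ) := by exact_mod_cast Nat.one_le_of_lt hn2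
    have hnx : (⌊x⌋₊:ℝ) ≤ x := Nat.floor_le hx0.le
    have hxn : x < ⌊x⌋₊ + 1 := Nat.lt_floor_add_one x
    have hlog : Real.log ((⌊x⌋₊:ℝ)/x) = Real.log (⌊x⌋₊:ℝ) - Real.log x :=
      Real.log_div (by positivity) hx0.ne'
    have hlog2 : Real.log (1 + 1/(⌊x⌋₊:ℝ)) = Real.log ((⌊x⌋₊:ℝ) + 1) - Real.log (⌊x⌋₊:ℝ) := by
      rw [← Real.log_div (by positivity) (by positivity)]
      congr 1
      field_simp
    have hb := (gamma_bounds hx).2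
    have hrw : rr x = (x - ⌊x⌋₊) + (x + 1/2) * (Real.log (⌊x⌋₊:ℝ) - Real.log x) := by
      rw [rr, hlog]
    rw [aseq, hrw, hlog2]
    nlinarith [hb]

lemma stirling_gamma :
    Tendsto (fun x : ℝ => Real.Gamma (x+1) * Real.exp x / x ^ (x + 1/2 : ℝ))
      atTop (nhds (Real.sqrt (2*π))) := by
  have h := (Real.continuous_exp.tendsto _).comp tendsto_log_stirling
  rw [Function.comp_def] at h
  rw [Real.exp_log (Real.sqrt_pos.mpr (by positivity))] at h
  apply h.congr'
  filter_upwards [eventually_gt_atTop 0] with x hx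
  rw [Real.exp_sub, Real.exp_add, Real.exp_log (Real.Gamma_pos_of_pos (by linarith)),
    Real.rpow_def_of_pos hx, mul_comm (Real.log x)]

lemma pointwise (γ m α : ℝ) (hγ : 0 < γ) (hm : 0 ≤ m) (hα : 0 < α) (σα : ℝ) :
    σα * (2*α/γ)^m * (α/Real.exp 1)^α * γ^(1+2*m) / Real.Gamma (α+1+m)
    = (σα / Real.sqrt (2*α/γ)) * ((2*γ)^(m+1/2:ℝ) * Real.exp m) /
      ((Real.Gamma (α+1+m) * Real.exp (α+m) / (α+m)^(α+m+1/2:ℝ)) *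
        ((1+m/α)^α * (1+m/α)^(m+1/2:ℝ))) := by
  have hαm : 0 < α + m := by linarith
  have h2αγ : 0 < 2*α/γ := by positivity
  have h1mα : 0 < 1 + m/α := by positivity
  have hG : 0 < Real.Gamma (α+1+m) := Real.Gamma_pos_of_pos (by linarith)
  have hs : 0 < Real.sqrt (2*α/γ) := Real.sqrt_pos.mpr h2αγ
  have key1 : (1+m/α)^α * (1+m/α)^(m+1/2:ℝ) = (α+m)^(α+m+1/2:ℝ) / α^(α+m+1/2:ℝ) := by
    rw [← Real.rpow_add h1mα, show α+(m+1/2) = α+m+1/2 by ring,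
      show (1+m/α) = (α+m)/α from ((by rw [add_div, div_self hα.ne'] : (α+m)/α = 1 + m/α)).symm,
      Real.div_rpow hαm.le hα.le]
  have key3 : Real.sqrt (2*α/γ) * (2*α/γ)^m = (2*α/γ)^(m+1/2:ℝ) := by
    rw [Real.sqrt_eq_rpow, ← Real.rpow_add h2αγ, show (1/2+m:ℝ) = m+1/2 by ring]
  have hγ2 : γ^(1+2*m) = γ^(m+1/2:ℝ) * γ^(m+1/2:ℝ) := by
    rw [← Real.rpow_add hγ, show (m+1/2+(m+1/2):ℝ) = 1+2*m by ring]
  have key4 : (2*α/γ)^(m+1/2:ℝ) * γ^(1+2*m) = (2*γ)^(m+1/2:ℝ) * α^(m+1/2:ℝ) := by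
    rw [hγ2, ← mul_assoc, ← Real.mul_rpow h2αγ.le hγ.le,
      show 2*α/γ*γ = 2*α by field_simp, ← Real.mul_rpow (by positivity) hγ.le,
      show 2*α*γ = (2*γ)*α by ring, Real.mul_rpow (by positivity) hα.le]
  have key5 : (α/Real.exp 1)^α = α^α / Real.exp α := by
    rw [Real.div_rpow hα.le (Real.exp_pos 1).le, Real.exp_one_rpow]
  have key6 : α^(m+1/2:ℝ) * α^α = α^(α+m+1/2:ℝ) := by
    rw [← Real.rpow_add hα, show (m+1/2+α:ℝ) = α+m+1/2 by ring]
  have hmain : Real.sqrt (2*α/γ) * (2*α/γ)^m * γ^(1+2*m) * α^α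
      = (2*γ)^(m+1/2:ℝ) * α^(α+m+1/2:ℝ) := by
    rw [key3, key4, mul_assoc, key6]
  rw [key1, key5, Real.exp_add]
  have hPd : (0:ℝ) < (α+m)^(α+m+1/2:ℝ) := Real.rpow_pos_of_pos hαm _
  have hAd : (0:ℝ) < α^(α+m+1/2:ℝ) := Real.rpow_pos_of_pos hα _
  have hT : (0:ℝ) < (2*α/γ)^m := Real.rpow_pos_of_pos h2αγ _
  have hC : (0:ℝ) < (2*γ)^(m+1/2:ℝ) := Real.rpow_pos_of_pos (by positivity) _
  have hCm : (0:ℝ) < γ^(1+2*m) := Real.rpow_pos_of_pos hγ _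
  have hA1 : (0:ℝ) < α^α := Real.rpow_pos_of_pos hα _
  set S := Real.sqrt (2*α/γ)
  set T := (2*α/γ)^m
  set Gm := Real.Gamma (α+1+m)
  set A1 := α^α
  set A2 := α^(α+m+1/2:ℝ)
  set P2 := (α+m)^(α+m+1/2:ℝ)
  set C := (2*γ)^(m+1/2:ℝ)
  set Cm := γ^(1+2*m)
  field_simp
  linear_combination σα * hmain

/-- Stirling-type limit: `σ(α)·(2α/γ)^{kβ/2}·(α/e)^α·γ^{1+kβ}/Γ(α+1+kβ/2)`
tends to `(2γ)^{(1+kβ)/2}/√(2π)` as `α → +∞` (powers are real powers). -/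
theorem stmt3 (γ β : ℝ) (hγ : 0 < γ) (hβ : 0 < β) (k : ℕ) (cσ : ℝ) (σ : ℝ → ℝ)
    (hσ : Tendsto (fun α => σ α - Real.sqrt (2 * α / γ)) atTop (nhds cσ)) :
    Tendsto
      (fun α => σ α * (2 * α / γ) ^ ((k : ℝ) * β / 2) * (α / Real.exp 1) ^ α *
        γ ^ (1 + (k : ℝ) * β) / Real.Gamma (α + 1 + (k : ℝ) * β / 2))
      atTop
      (nhds ((2 * γ) ^ ((1 + (k : ℝ) * β) / 2) / Real.sqrt (2 * Real.pi))) := by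
  set m : ℝ := (k:ℝ) * β / 2 with hmdef
  have hm : 0 ≤ m := by positivity
  have hexp1 : 1 + (k:ℝ) * β = 1 + 2*m := by rw [hmdef]; ring
  have hexp2 : (1 + (k:ℝ) * β)/2 = m + 1/2 := by rw [hmdef]; ring
  rw [hexp2]
  simp only [hexp1]
  -- limits of the pieces
  have hadd : Tendsto (fun α : ℝ => α + m) atTop atTop :=
    tendsto_atTop_add_const_right _ _ tendsto_id
  have hP2 : Tendsto (fun α : ℝ =>
      Real.Gamma (α + 1 + m) * Real.exp (α + m) / (α + m) ^ (α + m + 1/2 : ℝ))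
      atTop (nhds (Real.sqrt (2*π))) := by
    have h := stirling_gamma.comp hadd
    apply h.congr
    intro α
    simp only [Function.comp_apply]
    rw [show α + m + 1 = α + 1 + m by ring]
  have hsqrt : Tendsto Real.sqrt atTop atTop := by
    apply (tendsto_rpow_atTop (by norm_num : (0:ℝ) < 1/2)).congr'
    filter_upwards [eventually_ge_atTop (0:ℝ)] with x hx
    exact (Real.sqrt_eq_rpow x).symm
  have hs_atTop : Tendsto (fun α : ℝ => Real.sqrt (2*α/γ)) atTop atTop := by
    apply hsqrt.comp
    have h := Tendsto.atTop_mul_const (by positivity : (0:ℝ) < 2/γ) (tendsto_id (α := ℝ) (x := atTop))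
    apply h.congr
    intro α
    show α * (2/γ) = 2*α/γ
    ring
  have hP1 : Tendsto (fun α => σ α / Real.sqrt (2*α/γ)) atTop (nhds 1) := by
    have h0 : Tendsto (fun α => (σ α - Real.sqrt (2*α/γ)) / Real.sqrt (2*α/γ))
        atTop (nhds 0) := hσ.div_atTop hs_atTop
    have h1 := h0.add (tendsto_const_nhds (x := (1:ℝ)))
    rw [zero_add] at h1
    apply h1.congr'
    filter_upwards [eventually_gt_atTop (0:ℝ)] with α hα
    have hs0 : 0 < Real.sqrt (2*α/γ) := Real.sqrt_pos.mpr (by positivity)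
    field_simp
    ring
  have hP3 : Tendsto (fun α : ℝ => (1 + m/α) ^ α) atTop (nhds (Real.exp m)) :=
    tendsto_one_add_div_rpow_exp m
  have hP4 : Tendsto (fun α : ℝ => (1 + m/α) ^ (m + 1/2 : ℝ)) atTop (nhds 1) := by
    have hbase : Tendsto (fun α : ℝ => 1 + m/α) atTop (nhds 1) := by
      have h := Tendsto.div_atTop (tendsto_const_nhds (x := m)) (tendsto_id (α := ℝ))
      have h2 := (tendsto_const_nhds (x := (1:ℝ))).add h
      simpa using h2
    have h := hbase.rpow (tendsto_const_nhds (x := (m+1/2:ℝ))) (Or.inl one_ne_zero)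
    simpa using h
  have hL : Tendsto (fun α => (σ α / Real.sqrt (2*α/γ)) * ((2*γ) ^ (m+1/2:ℝ) * Real.exp m) /
      ((Real.Gamma (α+1+m) * Real.exp (α+m) / (α+m) ^ (α+m+1/2:ℝ)) *
        ((1+m/α)^α * (1+m/α)^(m+1/2:ℝ))))
      atTop (nhds (1 * ((2*γ)^(m+1/2:ℝ) * Real.exp m) / (Real.sqrt (2*π) * (Real.exp m * 1)))) :=
    (hP1.mul tendsto_const_nhds).div (hP2.mul (hP3.mul hP4)) (by positivity)
  have hval : 1 * ((2*γ)^(m+1/2:ℝ) * Real.exp m) / (Real.sqrt (2*π) * (Real.exp m * 1))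
      = (2*γ)^(m+1/2:ℝ) / Real.sqrt (2*π) := by
    rw [one_mul, mul_one]
    rw [mul_comm (Real.sqrt (2*π)) (Real.exp m), mul_comm ((2*γ)^(m+1/2:ℝ)) (Real.exp m),
      mul_div_mul_left _ _ (Real.exp_ne_zero m)]
  rw [hval] at hL
  apply hL.congr'
  filter_upwards [eventually_gt_atTop (0:ℝ)] with α hα
  exact (pointwise γ m α hγ hm hα (σ α)).symm
end

section
/- For every fixed integer n ≥ 0, the functions x ↦ n! · (2/α)^{n/2} · (−1)^n · L_n^{(α)}(√(2α)·x + α) converge locally uniformly on ℝ, as α → +∞, to the physicists' Hermite polynomial x ↦ H_n(x). -/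
open Filter

/-- The generalized Laguerre polynomial
`L_n^{(α)}(x) = ∑_{k=0}^n (−1)^k (Γ(n+α+1)/(Γ(k+α+1)(n−k)!k!)) x^k`. -/
noncomputable def laguerreL (n : ℕ) (α : ℝ) (x : ℝ) : ℝ :=
  ∑ k ∈ Finset.range (n + 1),
    (-1 : ℝ) ^ k *
      (Real.Gamma ((n : ℝ) + α + 1) /
        (Real.Gamma ((k : ℝ) + α + 1) * ((n - k).factorial : ℝ) * (k.factorial : ℝ))) *
      x ^ k

/-- The physicists' Hermite polynomials: `H_0 = 1`, `H_1 = 2x`,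
`H_{n+2}(x) = 2x·H_{n+1}(x) − 2(n+1)·H_n(x)`. -/
noncomputable def hermiteH : ℕ → ℝ → ℝ
  | 0, _ => 1
  | 1, x => 2 * x
  | (n + 2), x => 2 * x * hermiteH (n + 1) x - 2 * ((n : ℝ) + 1) * hermiteH n x

noncomputable def dd (n k : ℕ) (α : ℝ) : ℝ :=
  Real.Gamma ((n : ℝ) + α + 1) / Real.Gamma ((k : ℝ) + α + 1) * (n.choose k : ℝ) / (n.factorial : ℝ)

lemma dd_zero {n k : ℕ} (h : n < k) (α : ℝ) : dd n k α = 0 := by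
  simp [dd, Nat.choose_eq_zero_of_lt h]

lemma gamma_pos {α : ℝ} (hα : 0 < α) (k : ℕ) : 0 < Real.Gamma ((k : ℝ) + α + 1) :=
  Real.Gamma_pos_of_pos (by positivity)

lemma laguerre_eq_sum (n : ℕ) {α : ℝ} (hα : 0 < α) (x : ℝ) :
    laguerreL n α x = ∑ k ∈ Finset.range (n + 1), (-1 : ℝ) ^ k * dd n k α * x ^ k := by
  unfold laguerreL
  refine Finset.sum_congr rfl fun k hk => ?_
  have hk' : k ≤ n := Nat.lt_succ_iff.mp (Finset.mem_range.mp hk)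
  have h1 : (n.choose k * k.factorial * (n - k).factorial : ℕ) = n.factorial :=
    Nat.choose_mul_factorial_mul_factorial hk'
  have h2 : (n.choose k : ℝ) * (k.factorial : ℝ) * ((n - k).factorial : ℝ) = (n.factorial : ℝ) := by
    exact_mod_cast congrArg (Nat.cast : ℕ → ℝ) h1
  have hΓ := (gamma_pos hα k).ne'
  have hf : ((n - k).factorial : ℝ) ≠ 0 := Nat.cast_ne_zero.mpr (Nat.factorial_ne_zero _)
  have hf2 : ((k.factorial : ℕ) : ℝ) ≠ 0 := Nat.cast_ne_zero.mpr (Nat.factorial_ne_zero _)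
  have hnf : ((n.factorial : ℕ) : ℝ) ≠ 0 := Nat.cast_ne_zero.mpr (Nat.factorial_ne_zero _)
  have hc : (n.choose k : ℝ) ≠ 0 := Nat.cast_ne_zero.mpr (Nat.choose_pos hk').ne'
  have : Real.Gamma ((n : ℝ) + α + 1) /
        (Real.Gamma ((k : ℝ) + α + 1) * ((n - k).factorial : ℝ) * (k.factorial : ℝ)) = dd n k α := by
    unfold dd
    field_simp
    linear_combination -h2
  rw [this]

lemma choose_cast_sub (n k : ℕ) :
    ((n : ℝ) - k) * (n.choose k : ℝ) = (n : ℝ) * ((n - 1).choose k : ℝ) := by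
  rcases n with _ | m
  · rcases k with _ | j <;> simp
  · rcases le_or_gt k (m + 1) with h | h
    · have hnat : (m + 1) * Nat.choose m k = Nat.choose (m + 1) k * ((m + 1) - k) :=
        (Nat.add_one_mul_choose_eq m k).trans (Nat.choose_succ_right_eq (m + 1) k)
      have := congrArg (Nat.cast : ℕ → ℝ) hnat
      push_cast [Nat.cast_sub h] at this
      simp only [Nat.add_sub_cancel]
      push_cast
      linarith [this]
    · have h1 : Nat.choose (m + 1) k = 0 := Nat.choose_eq_zero_of_lt h
      have h2 : Nat.choose m k = 0 := Nat.choose_eq_zero_of_lt (by omega)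
      simp [h1, h2]

set_option maxHeartbeats 4000000 in
set_option maxRecDepth 8000 in
lemma key (m k : ℕ) {α : ℝ} (hα : 0 < α) :
    ((m : ℝ) + 2) * dd (m + 2) k α =
      (2 * ((m : ℝ) + 1) + 1 + α) * dd (m + 1) k α +
        (if k = 0 then 0 else dd (m + 1) (k - 1) α) - (((m : ℝ) + 1) + α) * dd m k α := by
  have hΓm : Real.Gamma ((m : ℝ) + α + 1) ≠ 0 := (gamma_pos hα m).ne'
  have hG1 : Real.Gamma (((m : ℕ) + 1 : ℕ) + α + 1) = ((m : ℝ) + α + 1) * Real.Gamma ((m : ℝ) + α + 1) := by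
    push_cast
    rw [show (m : ℝ) + 1 + α + 1 = ((m : ℝ) + α + 1) + 1 by ring, Real.Gamma_add_one (by positivity)]
  have hG2 : Real.Gamma (((m : ℕ) + 2 : ℕ) + α + 1) = ((m : ℝ) + α + 2) * (((m : ℝ) + α + 1) * Real.Gamma ((m : ℝ) + α + 1)) := by
    push_cast
    rw [show (m : ℝ) + 2 + α + 1 = ((m : ℝ) + 1 + α + 1) + 1 by ring, Real.Gamma_add_one (by positivity)]
    push_cast at hG1
    rw [hG1]
    ring
  rcases k with _ | j
  · simp only [if_pos rfl, dd, Nat.choose_zero_right, Nat.cast_zero, Nat.cast_one]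
    rw [hG1, hG2]
    have h0 : Real.Gamma (α + 1) ≠ 0 := (Real.Gamma_pos_of_pos (by linarith)).ne'
    push_cast [Nat.factorial_succ]
    simp only [Nat.cast_zero, zero_add]
    have hf : ((m.factorial : ℕ) : ℝ) ≠ 0 := Nat.cast_ne_zero.mpr (Nat.factorial_ne_zero _)
    field_simp
    ring
  · simp only [if_neg (Nat.succ_ne_zero j), Nat.succ_sub_one]
    have hGk : Real.Gamma (((j : ℕ) + 1 : ℕ) + α + 1) = ((j : ℝ) + α + 1) * Real.Gamma ((j : ℝ) + α + 1) := by
      push_cast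
      rw [show (j : ℝ) + 1 + α + 1 = ((j : ℝ) + α + 1) + 1 by ring, Real.Gamma_add_one (by positivity)]
    have hΓj : Real.Gamma ((j : ℝ) + α + 1) ≠ 0 := (gamma_pos hα j).ne'
    have P1 : ((m + 2).choose (j + 1) : ℝ) = ((m + 1).choose j : ℝ) + ((m + 1).choose (j + 1) : ℝ) := by
      rw [Nat.choose_succ_succ' (m + 1) j]; push_cast; ring
    have P2 : ((m + 1).choose (j + 1) : ℝ) = (m.choose j : ℝ) + (m.choose (j + 1) : ℝ) := by
      rw [Nat.choose_succ_succ' m j]; push_cast; ring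
    have S : ((m : ℝ) + 1 - j) * ((m + 1).choose j : ℝ) = ((m : ℝ) + 1) * (m.choose j : ℝ) := by
      have := choose_cast_sub (m + 1) j
      push_cast at this ⊢
      simpa using this
    have T : ((m:ℝ) + α + 2) * ((m + 2).choose (j+1) : ℝ) =
        (2*(m:ℝ) + 3 + α) * ((m + 1).choose (j+1) : ℝ) + ((j:ℝ) + 1 + α) * ((m + 1).choose j : ℝ)
          - ((m:ℝ) + 1) * (m.choose (j+1) : ℝ) := by
      linear_combination ((m:ℝ) + α + 2) * P1 + S - ((m:ℝ) + 1) * P2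
    set c2 := ((m + 2).choose (j + 1) : ℝ) with hc2
    set ca := ((m + 1).choose (j + 1) : ℝ) with hca
    set cb := ((m + 1).choose j : ℝ) with hcb
    set cc := (m.choose (j + 1) : ℝ) with hcc
    set F := (m.factorial : ℝ) with hF
    set G := Real.Gamma ((m : ℝ) + α + 1) with hGdef
    set H := Real.Gamma ((j : ℝ) + α + 1) with hHdef
    have hf : F ≠ 0 := Nat.cast_ne_zero.mpr (Nat.factorial_ne_zero _)
    have hm2 : (m : ℝ) + 2 ≠ 0 := by positivity
    have hm1' : (m : ℝ) + 1 ≠ 0 := by positivity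
    have hj1 : (j : ℝ) + α + 1 ≠ 0 := by positivity
    have E1 : dd (m + 2) (j + 1) α =
        ((m:ℝ) + α + 2) * (((m:ℝ) + α + 1) * G) * c2 /
          (((j:ℝ) + α + 1) * H * (((m:ℝ) + 2) * (((m:ℝ) + 1) * F))) := by
      unfold dd
      rw [hG2, hGk, ← hc2]
      push_cast [Nat.factorial_succ]
      field_simp
      try ring
      try exact Or.inl trivial
    have E2 : dd (m + 1) (j + 1) α =
        ((m:ℝ) + α + 1) * G * ca * ((m:ℝ) + 2) /
          (((j:ℝ) + α + 1) * H * (((m:ℝ) + 2) * (((m:ℝ) + 1) * F))) := by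
      unfold dd
      rw [hG1, hGk, ← hca]
      push_cast [Nat.factorial_succ]
      field_simp
      try ring
      try exact Or.inl trivial
    have E3 : dd (m + 1) j α =
        ((m:ℝ) + α + 1) * G * cb * (((j:ℝ) + α + 1) * ((m:ℝ) + 2)) /
          (((j:ℝ) + α + 1) * H * (((m:ℝ) + 2) * (((m:ℝ) + 1) * F))) := by
      unfold dd
      rw [hG1, ← hcb]
      push_cast [Nat.factorial_succ]
      field_simp
      try ring
      try exact Or.inl trivial
    have E4 : dd m (j + 1) α =
        G * cc * (((m:ℝ) + 2) * ((m:ℝ) + 1)) /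
          (((j:ℝ) + α + 1) * H * (((m:ℝ) + 2) * (((m:ℝ) + 1) * F))) := by
      unfold dd
      rw [hGk, ← hcc]
      push_cast [Nat.factorial_succ]
      field_simp
      try ring
      try exact Or.inl trivial
    rw [E1, E2, E3, E4]
    simp only [← mul_div_assoc]
    rw [← add_div, ← sub_div]
    congr 1
    linear_combination ((m:ℝ) + 2) * ((m:ℝ) + α + 1) * G * T

lemma laguerre_rec (m : ℕ) {α : ℝ} (hα : 0 < α) (x : ℝ) :
    ((m : ℝ) + 2) * laguerreL (m + 2) α x =
      (2 * ((m : ℝ) + 1) + 1 + α - x) * laguerreL (m + 1) α x -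
        (((m : ℝ) + 1) + α) * laguerreL m α x := by
  have e2 : laguerreL (m + 2) α x
      = ∑ k ∈ Finset.range (m + 3), (-1 : ℝ) ^ k * dd (m + 2) k α * x ^ k :=
    laguerre_eq_sum (m + 2) hα x
  have e1 : laguerreL (m + 1) α x
      = ∑ k ∈ Finset.range (m + 3), (-1 : ℝ) ^ k * dd (m + 1) k α * x ^ k := by
    rw [laguerre_eq_sum (m + 1) hα x, Finset.sum_range_succ (n := m + 2)]
    rw [dd_zero (by omega)]
    ring
  have e0 : laguerreL m α x
      = ∑ k ∈ Finset.range (m + 3), (-1 : ℝ) ^ k * dd m k α * x ^ k := by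
    rw [laguerre_eq_sum m hα x, Finset.sum_range_succ (n := m + 2),
      Finset.sum_range_succ (n := m + 1)]
    rw [dd_zero (show m < m + 2 by omega), dd_zero (show m < m + 1 by omega)]
    ring
  have ex : x * laguerreL (m + 1) α x
      = -∑ k ∈ Finset.range (m + 3),
          (-1 : ℝ) ^ k * (if k = 0 then 0 else dd (m + 1) (k - 1) α) * x ^ k := by
    rw [Finset.sum_range_succ'
      (fun k => (-1 : ℝ) ^ k * (if k = 0 then 0 else dd (m + 1) (k - 1) α) * x ^ k) (m + 2)]
    simp only [if_pos rfl, if_true, if_neg (Nat.succ_ne_zero _), Nat.add_sub_cancel, mul_zero,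
      zero_mul, add_zero, pow_zero, one_mul]
    rw [laguerre_eq_sum (m + 1) hα x, Finset.mul_sum, ← Finset.sum_neg_distrib]
    refine Finset.sum_congr rfl fun k _ => ?_
    ring
  have hx : (2 * ((m : ℝ) + 1) + 1 + α - x) * laguerreL (m + 1) α x
      = (2 * ((m : ℝ) + 1) + 1 + α) * laguerreL (m + 1) α x - x * laguerreL (m + 1) α x := by
    ring
  rw [e2, hx, ex, e1, e0, Finset.mul_sum, Finset.mul_sum, Finset.mul_sum]
  rw [sub_neg_eq_add, ← Finset.sum_add_distrib, ← Finset.sum_sub_distrib]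
  refine Finset.sum_congr rfl fun k _ => ?_
  have hk := key m k hα
  linear_combination ((-1 : ℝ) ^ k * x ^ k) * hk

noncomputable def Mh (n : ℕ) (α : ℝ) (x : ℝ) : ℝ :=
  (n.factorial : ℝ) * (2 / α) ^ ((n : ℝ) / 2) * (-1 : ℝ) ^ n *
    laguerreL n α (Real.sqrt (2 * α) * x + α)

lemma TLU_congr {F G : ℝ → ℝ → ℝ} {f : ℝ → ℝ}
    (h : ∀ᶠ α in atTop, ∀ x, F α x = G α x)
    (hF : TendstoLocallyUniformly F f atTop) :
    TendstoLocallyUniformly G f atTop := by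
  intro u hu x
  obtain ⟨t, ht, h2⟩ := hF u hu x
  refine ⟨t, ht, ?_⟩
  filter_upwards [h2, h] with α h2 h y hy
  rw [← h y]
  exact h2 y hy

lemma TLU_const (c : ℝ) :
    TendstoLocallyUniformly (fun (_ : ℝ) (_ : ℝ) => c) (fun _ => c) atTop := by
  intro u hu x
  exact ⟨Set.univ, Filter.univ_mem, Filter.Eventually.of_forall
    fun α y _ => refl_mem_uniformity hu⟩

lemma TLU_add {F G : ℝ → ℝ → ℝ} {f g : ℝ → ℝ}
    (hF : TendstoLocallyUniformly F f atTop) (hG : TendstoLocallyUniformly G g atTop) :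
    TendstoLocallyUniformly (fun α x => F α x + G α x) (fun x => f x + g x) atTop := by
  rw [Metric.tendstoLocallyUniformly_iff] at hF hG ⊢
  intro ε hε x
  obtain ⟨t1, ht1, he1⟩ := hF (ε / 2) (by linarith) x
  obtain ⟨t2, ht2, he2⟩ := hG (ε / 2) (by linarith) x
  refine ⟨t1 ∩ t2, Filter.inter_mem ht1 ht2, ?_⟩
  filter_upwards [he1, he2] with α h1 h2 y hy
  have := h1 y hy.1
  have := h2 y hy.2
  rw [Real.dist_eq] at *
  have : f y + g y - (F α y + G α y) = (f y - F α y) + (g y - G α y) := by ring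
  rw [this]
  calc |f y - F α y + (g y - G α y)| ≤ |f y - F α y| + |g y - G α y| := abs_add_le _ _
    _ < ε := by linarith [h1 y hy.1, h2 y hy.2]

lemma TLU_mul {F : ℝ → ℝ → ℝ} {f : ℝ → ℝ} (hF : TendstoLocallyUniformly F f atTop)
    (hf : Continuous f) {a : ℝ → ℝ} {c : ℝ} (ha : Tendsto a atTop (nhds c)) (g : ℝ → ℝ)
    (hg : Continuous g) :
    TendstoLocallyUniformly (fun α x => a α * g x * F α x) (fun x => c * g x * f x) atTop := by
  rw [Metric.tendstoLocallyUniformly_iff] at hF ⊢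
  intro ε hε x0
  have hK : IsCompact (Metric.closedBall x0 1) := isCompact_closedBall x0 1
  obtain ⟨Bg, hBg⟩ := hK.exists_bound_of_continuousOn hg.continuousOn
  obtain ⟨Bf, hBf⟩ := hK.exists_bound_of_continuousOn hf.continuousOn
  set B : ℝ := |Bg| + |Bf| + 1 with hB
  have hB0 : 0 < B := by positivity
  have hgB : ∀ y ∈ Metric.closedBall x0 1, |g y| ≤ B := by
    intro y hy
    have h1 := hBg y hy
    have : |g y| ≤ Bg := h1
    have : Bg ≤ |Bg| := le_abs_self _
    rw [hB]
    have h2 : (0:ℝ) ≤ |Bf| := abs_nonneg _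
    linarith [hBg y hy, le_abs_self Bg]
  have hfB : ∀ y ∈ Metric.closedBall x0 1, |f y| ≤ B := by
    intro y hy
    have h1 : |f y| ≤ Bf := hBf y hy
    rw [hB]
    linarith [le_abs_self Bf, abs_nonneg Bg]
  set D : ℝ := |c| * B + B * (B + 1) + 1 with hD
  have hD1 : 1 ≤ D := by
    have h1 : 0 ≤ |c| * B := mul_nonneg (abs_nonneg c) hB0.le
    have h2 : 0 ≤ B * (B + 1) := mul_nonneg hB0.le (by linarith)
    rw [hD]; linarith
  have hD0 : 0 < D := by linarith
  set ε' : ℝ := min 1 (ε / (2 * D)) with hε'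
  have hε'0 : 0 < ε' := lt_min one_pos (by positivity)
  obtain ⟨t, ht, hev⟩ := hF ε' hε'0 x0
  have hev2 : ∀ᶠ α in atTop, dist (a α) c < ε' :=
    (Metric.tendsto_nhds.mp ha) ε' hε'0
  refine ⟨t ∩ Metric.ball x0 1, Filter.inter_mem ht (Metric.ball_mem_nhds x0 one_pos), ?_⟩
  filter_upwards [hev, hev2] with α h1 h2 y hy
  have hyK : y ∈ Metric.closedBall x0 1 := Metric.ball_subset_closedBall hy.2
  have hd : |f y - F α y| < ε' := by
    have := h1 y hy.1
    rwa [Real.dist_eq] at this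
  have hac : |c - a α| < ε' := by
    rw [Real.dist_eq] at h2
    rwa [abs_sub_comm]
  have hFb : |F α y| ≤ B + 1 := by
    have hrw : F α y = f y + (F α y - f y) := by ring
    rw [hrw]
    have h3 : |F α y - f y| = |f y - F α y| := abs_sub_comm _ _
    calc |f y + (F α y - f y)| ≤ |f y| + |F α y - f y| := abs_add_le _ _
      _ ≤ B + 1 := by
          have := hfB y hyK
          have h4 : ε' ≤ 1 := min_le_left _ _
          rw [h3]
          linarith
  rw [Real.dist_eq]
  have hrw : c * g y * f y - a α * g y * F α y
      = c * g y * (f y - F α y) + (c - a α) * (g y * F α y) := by ring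
  rw [hrw]
  have h5 := hgB y hyK
  have t1 : |c * g y * (f y - F α y)| ≤ |c| * B * ε' := by
    rw [abs_mul, abs_mul]
    have e1 : |c| * |g y| ≤ |c| * B := mul_le_mul_of_nonneg_left h5 (abs_nonneg c)
    exact mul_le_mul e1 hd.le (abs_nonneg _) (by positivity)
  have t2 : |(c - a α) * (g y * F α y)| ≤ ε' * (B * (B + 1)) := by
    rw [abs_mul, abs_mul]
    have e2 : |g y| * |F α y| ≤ B * (B + 1) :=
      mul_le_mul h5 hFb (abs_nonneg _) hB0.le
    exact mul_le_mul hac.le e2 (by positivity) hε'0.le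
  have hsum : |c * g y * (f y - F α y) + (c - a α) * (g y * F α y)|
      ≤ |c| * B * ε' + ε' * (B * (B + 1)) := le_trans (abs_add_le _ _) (by linarith)
  have hε'2 : ε' ≤ ε / (2 * D) := min_le_right _ _
  have hfin : |c| * B * ε' + ε' * (B * (B + 1)) = (D - 1) * ε' := by rw [hD]; ring
  have : (D - 1) * ε' < ε := by
    calc (D - 1) * ε' ≤ (D - 1) * (ε / (2 * D)) := by
          have : (0:ℝ) ≤ D - 1 := by linarith
          gcongr
      _ < ε := by
          have hrw2 : (D - 1) * (ε / (2 * D)) = ((D - 1) * ε) / (2 * D) := by ring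
          rw [hrw2, div_lt_iff₀ (by positivity : (0:ℝ) < 2 * D)]
          nlinarith
  linarith [hsum, hfin ▸ hsum]

lemma hermiteH_cont : ∀ n, Continuous (hermiteH n) := by
  have key : ∀ n, Continuous (hermiteH n) ∧ Continuous (hermiteH (n + 1)) := by
    intro n
    induction n with
    | zero =>
      constructor
      · show Continuous fun _ : ℝ => (1 : ℝ)
        exact continuous_const
      · show Continuous fun x : ℝ => 2 * x
        fun_prop
    | succ k ih =>
      refine ⟨ih.2, ?_⟩
      show Continuous fun x : ℝ => 2 * x * hermiteH (k + 1) x - 2 * ((k : ℝ) + 1) * hermiteH k x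
      exact ((continuous_const.mul continuous_id).mul ih.2).sub (continuous_const.mul ih.1)
  exact fun n => (key n).1

lemma sqrt_two_div_tendsto :
    Tendsto (fun α : ℝ => Real.sqrt (2 / α)) atTop (nhds 0) := by
  have h1 : Tendsto (fun α : ℝ => 2 / α) atTop (nhds 0) :=
    Tendsto.div_atTop (tendsto_const_nhds) tendsto_id
  have h2 := (Real.continuous_sqrt.tendsto 0).comp h1
  simpa only [Function.comp_def, Real.sqrt_zero] using h2

lemma Mh_zero_eq {α : ℝ} (hα : 0 < α) (x : ℝ) : Mh 0 α x = 1 := by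
  have hΓ : Real.Gamma (((0:ℕ) : ℝ) + α + 1) ≠ 0 := (gamma_pos hα 0).ne'
  unfold Mh laguerreL
  rw [Finset.sum_range_one, show ((0:ℕ) : ℝ) / 2 = (0:ℝ) by norm_num, Real.rpow_zero]
  push_cast at hΓ ⊢
  simp only [pow_zero]
  field_simp
  simp

lemma Mh_one_eq {α : ℝ} (hα : 0 < α) (x : ℝ) :
    Mh 1 α x = 2 * x - Real.sqrt (2 / α) := by
  have h2α : (0:ℝ) < 2 / α := by positivity
  have hs : (2 / α) ^ ((1:ℝ) / 2) = Real.sqrt (2 / α) := (Real.sqrt_eq_rpow _).symm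
  have hst : Real.sqrt (2 / α) * Real.sqrt (2 * α) = 2 := by
    rw [← Real.sqrt_mul h2α.le]
    have : 2 / α * (2 * α) = 4 := by field_simp; ring
    rw [this, show (4:ℝ) = 2 ^ 2 by norm_num, Real.sqrt_sq (by norm_num)]
  have hL : laguerreL 1 α (Real.sqrt (2 * α) * x + α) = 1 - Real.sqrt (2 * α) * x := by
    rw [laguerre_eq_sum 1 hα]
    rw [Finset.sum_range_succ, Finset.sum_range_one]
    have hd0 : dd 1 0 α = (α + 1) := by
      unfold dd
      have hG1 : Real.Gamma (((1:ℕ) : ℝ) + α + 1) = (α + 1) * Real.Gamma ((0:ℝ) + α + 1) := by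
        push_cast
        rw [show (1:ℝ) + α + 1 = (α + 1) + 1 by ring, Real.Gamma_add_one (by positivity)]
        norm_num
      push_cast at hG1 ⊢
      rw [hG1]
      have := (gamma_pos hα 0).ne'
      push_cast at this
      field_simp
      simp
    have hd1 : dd 1 1 α = 1 := by
      have h1 : Real.Gamma ((1:ℝ) + α + 1) ≠ 0 := by
        have := (gamma_pos hα 1).ne'
        push_cast at this
        exact this
      unfold dd
      push_cast
      norm_num
      exact h1
    rw [hd0, hd1]
    ring
  simp only [Mh, hL]
  push_cast
  rw [hs]
  simp only [Nat.factorial_one, Nat.cast_one, one_mul, pow_one]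
  linear_combination x * hst

lemma Mh_step (k : ℕ) {α : ℝ} (hα : 0 < α) (x : ℝ) :
    Mh (k + 2) α x =
      2 * x * Mh (k + 1) α x +
        (-(2 * (k : ℝ) + 3) * Real.sqrt (2 / α)) * 1 * Mh (k + 1) α x +
        (-(2 * ((k : ℝ) + 1) + 2 * ((k : ℝ) + 1) ^ 2 / α)) * 1 * Mh k α x := by
  have h2α : (0:ℝ) < 2 / α := by positivity
  have hss : Real.sqrt (2 / α) * Real.sqrt (2 / α) = 2 / α := Real.mul_self_sqrt h2α.le
  have hst : Real.sqrt (2 / α) * Real.sqrt (2 * α) = 2 := by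
    rw [← Real.sqrt_mul h2α.le]
    have : 2 / α * (2 * α) = 4 := by field_simp; ring
    rw [this, show (4:ℝ) = 2 ^ 2 by norm_num, Real.sqrt_sq (by norm_num)]
  have hs2a : Real.sqrt (2 / α) * Real.sqrt (2 / α) * α = 2 := by
    rw [hss]; field_simp
  have e1 : (2 / α) ^ ((((k + 1) : ℕ) : ℝ) / 2)
      = (2 / α) ^ (((k : ℕ) : ℝ) / 2) * Real.sqrt (2 / α) := by
    have h : (((k + 1) : ℕ) : ℝ) / 2 = ((k : ℕ) : ℝ) / 2 + 1 / 2 := by push_cast; ring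
    rw [h, Real.rpow_add h2α, ← Real.sqrt_eq_rpow]
  have e2 : (2 / α) ^ ((((k + 2) : ℕ) : ℝ) / 2)
      = (2 / α) ^ (((k : ℕ) : ℝ) / 2) * (Real.sqrt (2 / α) * Real.sqrt (2 / α)) := by
    have h : (((k + 2) : ℕ) : ℝ) / 2 = ((k : ℕ) : ℝ) / 2 + 1 := by push_cast; ring
    rw [h, Real.rpow_add h2α, Real.rpow_one, hss]
  have hf2 : (((k + 2).factorial : ℕ) : ℝ) = ((k:ℝ) + 2) * (((k:ℝ) + 1) * (k.factorial : ℝ)) := by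
    rw [Nat.factorial_succ, Nat.factorial_succ]; push_cast; ring
  have hf1 : (((k + 1).factorial : ℕ) : ℝ) = ((k:ℝ) + 1) * (k.factorial : ℝ) := by
    rw [Nat.factorial_succ]; push_cast; ring
  have hsgn2 : (-1:ℝ) ^ (k + 2) = (-1:ℝ) ^ k := by rw [pow_add]; norm_num
  have hsgn1 : (-1:ℝ) ^ (k + 1) = -(-1:ℝ) ^ k := by rw [pow_add]; norm_num
  have hrec := laguerre_rec k hα (Real.sqrt (2 * α) * x + α)
  have hinv : -(2 * ((k:ℝ) + 1) + 2 * ((k:ℝ) + 1) ^ 2 / α)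
      = -(2 * ((k:ℝ) + 1) + ((k:ℝ) + 1) ^ 2 * (Real.sqrt (2 / α) * Real.sqrt (2 / α))) := by
    rw [hss]; ring
  unfold Mh
  rw [e1, e2, hf2, hf1, hsgn2, hsgn1, hinv]
  linear_combination
    (((k:ℝ) + 1) * (k.factorial : ℝ) * ((2 / α) ^ (((k : ℕ) : ℝ) / 2)) * Real.sqrt (2 / α) *
        Real.sqrt (2 / α) * (-1:ℝ) ^ k) * hrec +
    (-(((k:ℝ) + 1) * (k.factorial : ℝ) * ((2 / α) ^ (((k : ℕ) : ℝ) / 2)) * (-1:ℝ) ^ k *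
        Real.sqrt (2 / α) * x * laguerreL (k + 1) α (Real.sqrt (2 * α) * x + α))) * hst +
    (-(((k:ℝ) + 1) * (k.factorial : ℝ) * ((2 / α) ^ (((k : ℕ) : ℝ) / 2)) * (-1:ℝ) ^ k *
        laguerreL k α (Real.sqrt (2 * α) * x + α))) * hs2a

lemma base0 : TendstoLocallyUniformly (Mh 0) (hermiteH 0) atTop := by
  have h : (fun _ : ℝ => (1:ℝ)) = hermiteH 0 := by funext x; rfl
  rw [← h]
  refine TLU_congr ?_ (TLU_const 1)
  filter_upwards [eventually_gt_atTop (0:ℝ)] with α hα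
  intro x
  rw [Mh_zero_eq hα]

lemma base1 : TendstoLocallyUniformly (Mh 1) (hermiteH 1) atTop := by
  have hneg : Tendsto (fun α : ℝ => -Real.sqrt (2 / α)) atTop (nhds 0) := by
    simpa using sqrt_two_div_tendsto.neg
  have h1 := TLU_mul (TLU_const 1) continuous_const
    (tendsto_const_nhds : Tendsto (fun _ : ℝ => (2:ℝ)) atTop (nhds 2)) (fun x => x) continuous_id
  have h2 := TLU_mul (TLU_const 1) continuous_const hneg (fun _ => (1:ℝ)) continuous_const
  have h3 := TLU_add h1 h2
  have hlim : (fun x : ℝ => 2 * x * 1 + 0 * 1 * 1) = hermiteH 1 := by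
    funext x
    show 2 * x * 1 + 0 * 1 * 1 = 2 * x
    ring
  rw [← hlim]
  refine TLU_congr ?_ h3
  filter_upwards [eventually_gt_atTop (0:ℝ)] with α hα
  intro x
  rw [Mh_one_eq hα]
  ring

lemma step (k : ℕ) (hk : TendstoLocallyUniformly (Mh k) (hermiteH k) atTop)
    (hk1 : TendstoLocallyUniformly (Mh (k + 1)) (hermiteH (k + 1)) atTop) :
    TendstoLocallyUniformly (Mh (k + 2)) (hermiteH (k + 2)) atTop := by
  have t1 := TLU_mul hk1 (hermiteH_cont (k + 1))
    (tendsto_const_nhds : Tendsto (fun _ : ℝ => (2:ℝ)) atTop (nhds 2)) (fun x => x) continuous_id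
  have a2 : Tendsto (fun α : ℝ => (-(2 * (k : ℝ) + 3)) * Real.sqrt (2 / α)) atTop (nhds 0) := by
    simpa using sqrt_two_div_tendsto.const_mul (-(2 * (k : ℝ) + 3))
  have t2 := TLU_mul hk1 (hermiteH_cont (k + 1)) a2 (fun _ => (1:ℝ)) continuous_const
  have a3 : Tendsto (fun α : ℝ => -(2 * ((k : ℝ) + 1) + 2 * ((k : ℝ) + 1) ^ 2 / α)) atTop
      (nhds (-(2 * ((k : ℝ) + 1)))) := by
    have hz : Tendsto (fun α : ℝ => 2 * ((k : ℝ) + 1) ^ 2 / α) atTop (nhds 0) :=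
      Tendsto.div_atTop tendsto_const_nhds tendsto_id
    have hc : Tendsto (fun _ : ℝ => 2 * ((k : ℝ) + 1)) atTop (nhds (2 * ((k : ℝ) + 1))) :=
      tendsto_const_nhds
    have := (hc.add hz).neg
    simpa using this
  have t3 := TLU_mul hk (hermiteH_cont k) a3 (fun _ => (1:ℝ)) continuous_const
  have comb := TLU_add (TLU_add t1 t2) t3
  have hlim : (fun x : ℝ => (2 * x * hermiteH (k + 1) x
        + 0 * 1 * hermiteH (k + 1) x) + (-(2 * ((k : ℝ) + 1))) * 1 * hermiteH k x)
      = hermiteH (k + 2) := by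
    funext x
    show _ = 2 * x * hermiteH (k + 1) x - 2 * ((k : ℝ) + 1) * hermiteH k x
    ring
  rw [← hlim]
  refine TLU_congr ?_ comb
  filter_upwards [eventually_gt_atTop (0:ℝ)] with α hα
  intro x
  rw [Mh_step k hα x]

lemma main (n : ℕ) : TendstoLocallyUniformly (Mh n) (hermiteH n) atTop := by
  have key : ∀ m, TendstoLocallyUniformly (Mh m) (hermiteH m) atTop ∧
      TendstoLocallyUniformly (Mh (m + 1)) (hermiteH (m + 1)) atTop := by
    intro m
    induction m with
    | zero => exact ⟨base0, base1⟩
    | succ k ih => exact ⟨ih.2, step k ih.1 ih.2⟩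
  exact (key n).1

/-- Laguerre-to-Hermite polynomial limit: for fixed `n`,
`n!(2/α)^{n/2}(−1)^n L_n^{(α)}(√(2α)x + α)` converges locally uniformly to `H_n(x)`
as `α → +∞`. -/
theorem stmt5 (n : ℕ) :
    TendstoLocallyUniformly
      (fun α (x : ℝ) => (n.factorial : ℝ) * (2 / α) ^ ((n : ℝ) / 2) * (-1 : ℝ) ^ n *
        laguerreL n α (Real.sqrt (2 * α) * x + α))
      (hermiteH n) atTop := by
  exact main n
end

section
/- Define polynomials Q_k ∈ ℚ[X] for k ≥ 1 by Q_1 = −(3X² + 2)/8 and Q_{k+1} = (3/2)(k+1)·X·Q_k − (1/2)(X² − 1)·Q_k′ − (1/2)·∑_{j=1}^{k−1} Q_j·Q_{k−j}, where Q′ denotes the formal derivative. Then for every k ≥ 1, Q_k has degree exactly k+1 and satisfies the parity relation Q_k(−X) = (−1)^{k+1}·Q_k(X); in particular Q_{2k−1} is an even polynomial and Q_{2k} is an odd polynomial. -/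
open Polynomial

/-!
The substitution `X ↦ -X` is compatible with the recursion: differentiation shifts the parity
by one, so `X·Q_{k+1}`, `(X² - 1)·Q_{k+1}′` and every `Q_j·Q_{k+1-j}` have the parity of
`Q_{k+2}`. For the degree, `deg Q_k ≤ k + 1` by induction, and the top coefficients
`c_k = [X^{k+1}] Q_k` obey `c_{k+2} = (k + 2)·c_{k+1} - ½·∑ c_j·c_{k+1-j}`; starting from
`c_1 = -3/8`, this keeps every `c_k` negative, since the convolution terms are products of
two negative numbers.
-/

/-- The polynomials `Q_k ∈ ℚ[X]`: `Q_1 = −(3X²+2)/8` and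
`Q_{k+1} = (3/2)(k+1)·X·Q_k − (1/2)(X²−1)·Q_k′ − (1/2)∑_{j=1}^{k−1} Q_j·Q_{k−j}`. -/
noncomputable def QHer : ℕ → Polynomial ℚ
  | 0 => 0
  | 1 => C (-(1 : ℚ) / 8) * (3 * X ^ 2 + 2)
  | (k + 2) =>
      C (((3 : ℚ) / 2) * ((k : ℚ) + 2)) * X * QHer (k + 1)
        - C ((1 : ℚ) / 2) * (X ^ 2 - 1) * derivative (QHer (k + 1))
        - C ((1 : ℚ) / 2) *
            ∑ j ∈ (Finset.Ico 1 (k + 1)).attach, QHer j.1 * QHer (k + 1 - j.1)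
  decreasing_by
    all_goals try (have hj := Finset.mem_Ico.mp j.2)
    all_goals omega

namespace Polynomial

variable {R : Type*} [CommRing R]

theorem derivative_comp_neg_X_of_comp_neg_X {p : R[X]} {n : ℕ}
    (h : p.comp (-X) = (-1) ^ n * p) :
    (derivative p).comp (-X) = (-1) ^ (n + 1) * derivative p := by
  have h' := derivative_comp p (-X)
  rw [h, derivative_mul, derivative_neg, derivative_X, derivative_pow, derivative_neg,
    derivative_one] at h'
  simp only [neg_zero, zero_mul, mul_zero, zero_add] at h'
  rw [pow_succ]
  linear_combination h'

end Polynomial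

theorem QHer_add_two (k : ℕ) :
    QHer (k + 2) = C ((3 / 2 : ℚ) * (k + 2)) * X * QHer (k + 1)
      - C (1 / 2 : ℚ) * (X ^ 2 - 1) * derivative (QHer (k + 1))
      - C (1 / 2 : ℚ) * ∑ j ∈ Finset.Ico 1 (k + 1), QHer j * QHer (k + 1 - j) := by
  rw [QHer, Finset.sum_attach (Finset.Ico 1 (k + 1)) fun j ↦ QHer j * QHer (k + 1 - j)]

theorem QHer_induction {P : ℕ → Prop} (zero : P 0) (one : P 1)
    (add_two : ∀ k, (∀ j ≤ k + 1, P j) → P (k + 2)) (k : ℕ) : P k := by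
  induction k using Nat.strong_induction_on with
  | _ k ih =>
    match k with
    | 0 => exact zero
    | 1 => exact one
    | k + 2 => exact add_two k fun j hj ↦ ih j (by omega)

theorem QHer_comp_neg_X (k : ℕ) : (QHer k).comp (-X) = (-1) ^ (k + 1) * QHer k := by
  induction k using QHer_induction with
  | zero => simp [QHer]
  | one => simp [QHer]
  | add_two k ih =>
    have hsum : ∀ j ∈ Finset.Ico 1 (k + 1),
        (QHer j).comp (-X) * (QHer (k + 1 - j)).comp (-X)
          = (-1) ^ (k + 3) * (QHer j * QHer (k + 1 - j)) := by
      intro j hj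
      have hj := Finset.mem_Ico.mp hj
      rw [ih j (by omega), ih (k + 1 - j) (by omega),
        show k + 3 = j + 1 + (k + 1 - j + 1) by omega, pow_add]
      ring
    rw [QHer_add_two]
    simp only [sub_comp, mul_comp, sum_comp, C_comp, X_comp, pow_comp, one_comp]
    rw [derivative_comp_neg_X_of_comp_neg_X (ih (k + 1) le_rfl), ih (k + 1) le_rfl,
      Finset.sum_congr rfl hsum, ← Finset.mul_sum]
    ring

theorem natDegree_QHer_le (k : ℕ) : (QHer k).natDegree ≤ k + 1 := by
  induction k using QHer_induction with
  | zero => simp [QHer]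
  | one => rw [QHer]; compute_degree
  | add_two k ih =>
    have hX : (C ((3 / 2 : ℚ) * (k + 2)) * X).natDegree ≤ 1 := by compute_degree
    have hX2 : (C (1 / 2 : ℚ) * (X ^ 2 - 1)).natDegree ≤ 2 := by compute_degree
    have hder : (derivative (QHer (k + 1))).natDegree ≤ k + 1 :=
      (natDegree_derivative_le _).trans (by have := ih (k + 1) le_rfl; omega)
    have hsum :
        (∑ j ∈ Finset.Ico 1 (k + 1), QHer j * QHer (k + 1 - j)).natDegree ≤ k + 3 := by
      refine natDegree_sum_le_of_forall_le _ _ fun j hj ↦ ?_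
      have hj := Finset.mem_Ico.mp hj
      refine (natDegree_mul_le_of_le (ih j (by omega)) (ih (k + 1 - j) (by omega))).trans ?_
      omega
    rw [QHer_add_two]
    refine (natDegree_sub_le _ _).trans (max_le ((natDegree_sub_le _ _).trans (max_le ?_ ?_))
      ((natDegree_C_mul_le _ _).trans hsum))
    · exact (natDegree_mul_le_of_le hX (ih (k + 1) le_rfl)).trans (by omega)
    · exact (natDegree_mul_le_of_le hX2 hder).trans (by omega)

theorem coeff_QHer_add_two (k : ℕ) :
    (QHer (k + 2)).coeff (k + 3) = (k + 2) * (QHer (k + 1)).coeff (k + 2)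
      - 1 / 2 * ∑ j ∈ Finset.Ico 1 (k + 1),
          (QHer j).coeff (j + 1) * (QHer (k + 1 - j)).coeff (k + 1 - j + 1) := by
  have hQ := natDegree_QHer_le
  have hX2 : (C (1 / 2 : ℚ) * (X ^ 2 - 1)).natDegree ≤ 2 := by compute_degree
  have hder : (derivative (QHer (k + 1))).natDegree ≤ k + 1 :=
    (natDegree_derivative_le _).trans (by have := hQ (k + 1); omega)
  have hX : (C ((3 / 2 : ℚ) * (k + 2)) * X * QHer (k + 1)).coeff (k + 3)
      = 3 / 2 * (k + 2) * (QHer (k + 1)).coeff (k + 2) := by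
    rw [mul_assoc, coeff_C_mul, coeff_X_mul]
  have hmid : (C (1 / 2 : ℚ) * (X ^ 2 - 1) * derivative (QHer (k + 1))).coeff (k + 3)
      = 1 / 2 * ((QHer (k + 1)).coeff (k + 2) * (k + 2)) := by
    rw [show k + 3 = 2 + (k + 1) by omega, coeff_mul_add_eq_of_natDegree_le hX2 hder,
      coeff_derivative]
    simp only [coeff_C_mul, coeff_sub, coeff_X_pow, coeff_one, if_true, OfNat.ofNat_ne_zero,
      if_false]
    push_cast
    ring
  have hsum : ∀ j ∈ Finset.Ico 1 (k + 1), (QHer j * QHer (k + 1 - j)).coeff (k + 3)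
      = (QHer j).coeff (j + 1) * (QHer (k + 1 - j)).coeff (k + 1 - j + 1) := by
    intro j hj
    have hj := Finset.mem_Ico.mp hj
    rw [show k + 3 = j + 1 + (k + 1 - j + 1) by omega, coeff_mul_add_eq_of_natDegree_le (hQ j)
      ((hQ _).trans (by omega))]
  rw [QHer_add_two, coeff_sub, coeff_sub, hX, hmid, coeff_C_mul, finsetSum_coeff,
    Finset.sum_congr rfl hsum]
  ring

theorem coeff_QHer_neg {k : ℕ} (hk : 1 ≤ k) : (QHer k).coeff (k + 1) < 0 := by
  induction k using QHer_induction with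
  | zero => omega
  | one => norm_num [QHer]
  | add_two k ih =>
    have hconv : 0 ≤ ∑ j ∈ Finset.Ico 1 (k + 1),
        (QHer j).coeff (j + 1) * (QHer (k + 1 - j)).coeff (k + 1 - j + 1) := by
      refine Finset.sum_nonneg fun j hj ↦ ?_
      have hj := Finset.mem_Ico.mp hj
      exact (mul_pos_of_neg_of_neg (ih j (by omega) hj.1)
        (ih (k + 1 - j) (by omega) (by omega))).le
    have hlead : ((k : ℚ) + 2) * (QHer (k + 1)).coeff (k + 2) < 0 :=
      mul_neg_of_pos_of_neg (by positivity) (ih (k + 1) le_rfl (by omega))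
    rw [coeff_QHer_add_two]
    linarith

theorem natDegree_QHer {k : ℕ} (hk : 1 ≤ k) : (QHer k).natDegree = k + 1 :=
  (natDegree_QHer_le k).antisymm (le_natDegree_of_ne_zero (coeff_QHer_neg hk).ne)

/-- For every `k ≥ 1`, `Q_k` has degree exactly `k+1` and satisfies the parity relation
`Q_k(−X) = (−1)^{k+1} Q_k(X)`; in particular `Q_{2k−1}` is even and `Q_{2k}` is odd. -/
theorem stmt10 : ∀ k : ℕ, 1 ≤ k →
    (QHer k).degree = (k + 1 : ℕ) ∧
    (QHer k).comp (-X) = (-1) ^ (k + 1) * QHer k :=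
  fun k hk ↦
    ⟨(degree_eq_iff_natDegree_eq_of_pos k.succ_pos).2 (natDegree_QHer hk), QHer_comp_neg_X k⟩
end

section
/- Let K be a field of characteristic zero, let t₀ ≠ t₁ be elements of K, let m ≥ 1 be an integer, and let P ∈ K[X] satisfy (X − t₀)(X − t₁)·P′ = m·(X − (t₀+t₁)/2)·P, where P′ is the formal derivative. If m is even then P = c·((X − t₀)(X − t₁))^{m/2} for some c ∈ K, and if m is odd then P = 0. In particular, the kernel in K[X] of the operator P ↦ (X − t₀)(X − t₁)·P′ − m·(X − (t₀+t₁)/2)·P is spanned by ((X − t₀)(X − t₁))^{m/2} when m is even and is trivial when m is odd. -/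
/-!
Write `D = (X - t₀)(X - t₁)`, so that `D' = 2(X - (t₀ + t₁)/2)`. Evaluating the equation
`D P' = c (X - (t₀ + t₁)/2) P` at `t₀` and `t₁` shows that `D ∣ P` whenever `c ≠ 0`, and
`P = D R` solves it exactly when `R` solves it with `c - 2`. Peeling off factors of `D`
lowers an even `m` to `0`, where `P' = 0`, and an odd `m` to `-1`; but comparing the
coefficients of `X^(deg P + 1)` shows that a nonzero solution has degree `c`, which cannot
be `-1`.
-/

open Polynomial

namespace Polynomial

variable {K : Type*} [Field K]

theorem coeff_X_mul_derivative (p : K[X]) (n : ℕ) :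
    (X * derivative p).coeff n = n * p.coeff n := by
  cases n with
  | zero => simp
  | succ n => rw [coeff_X_mul, coeff_derivative, mul_comm]; push_cast; rfl

/-- With `D = (X - t₀)(X - t₁)` this is `D P' = (c/2) D' P`, the equation satisfied by
`D^(c/2)`. -/
def SolvesPowerEq (t₀ t₁ c : K) (P : K[X]) : Prop :=
  (X - C t₀) * (X - C t₁) * derivative P = C c * ((X - C ((t₀ + t₁) / 2)) * P)

namespace SolvesPowerEq

variable {t₀ t₁ c : K} {P : K[X]}

theorem symm (h : SolvesPowerEq t₀ t₁ c P) : SolvesPowerEq t₁ t₀ c P := by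
  unfold SolvesPowerEq at *
  rw [add_comm t₁]
  linear_combination h

theorem eval_left_eq_zero [NeZero (2 : K)] (h : SolvesPowerEq t₀ t₁ c P) (hne : t₀ ≠ t₁)
    (hc : c ≠ 0) : P.eval t₀ = 0 := by
  have h₀ := congrArg (eval t₀) h
  simp only [eval_mul, eval_sub, eval_X, eval_C, sub_self, zero_mul] at h₀
  have hmid : t₀ - (t₀ + t₁) / 2 ≠ 0 := by
    rw [show t₀ - (t₀ + t₁) / 2 = (t₀ - t₁) / 2 by field_simp; ring]
    exact div_ne_zero (sub_ne_zero.2 hne) two_ne_zero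
  simpa [hc, hmid] using h₀.symm

theorem dvd [NeZero (2 : K)] (h : SolvesPowerEq t₀ t₁ c P) (hne : t₀ ≠ t₁) (hc : c ≠ 0) :
    (X - C t₀) * (X - C t₁) ∣ P :=
  (isCoprime_X_sub_C_of_isUnit_sub (sub_ne_zero.2 hne).isUnit).mul_dvd
    (dvd_iff_isRoot.2 (h.eval_left_eq_zero hne hc))
    (dvd_iff_isRoot.2 (h.symm.eval_left_eq_zero hne.symm hc))

theorem of_mul [NeZero (2 : K)] {R : K[X]}
    (h : SolvesPowerEq t₀ t₁ c ((X - C t₀) * (X - C t₁) * R)) :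
    SolvesPowerEq t₀ t₁ (c - 2) R := by
  have hD : (X - C t₀) * (X - C t₁) ≠ (0 : K[X]) :=
    mul_ne_zero (X_sub_C_ne_zero t₀) (X_sub_C_ne_zero t₁)
  have hmid : 2 * C ((t₀ + t₁) / 2) = C t₀ + C t₁ := by
    rw [← C_ofNat, ← C_mul, ← C_add, mul_div_cancel₀ _ two_ne_zero]
  unfold SolvesPowerEq at *
  apply mul_left_cancel₀ hD
  rw [derivative_mul, derivative_mul] at h
  simp only [derivative_sub, derivative_X, derivative_C, sub_zero, one_mul, mul_one] at h
  rw [C_sub, C_ofNat]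
  linear_combination h - (X - C t₀) * (X - C t₁) * R * hmid

theorem natDegree_eq [CharZero K] (h : SolvesPowerEq t₀ t₁ c P) (hP : P ≠ 0) :
    (P.natDegree : K) = c := by
  set d := P.natDegree
  have hexp : (X - C t₀) * (X - C t₁) * derivative P =
      X * (X * derivative P) - C (t₀ + t₁) * (X * derivative P)
        + C (t₀ * t₁) * derivative P := by
    rw [C_add, C_mul]; ring
  have hcoeff : coeff (X * (X * derivative P) - C (t₀ + t₁) * (X * derivative P)
      + C (t₀ * t₁) * derivative P) (d + 1) =
      coeff (C c * ((X - C ((t₀ + t₁) / 2)) * P)) (d + 1) := by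
    rw [← hexp, h]
  simp only [sub_mul, coeff_add, coeff_sub, coeff_C_mul, coeff_X_mul, coeff_X_mul_derivative,
    coeff_derivative, coeff_eq_zero_of_natDegree_lt (show d < d + 1 by omega),
    coeff_eq_zero_of_natDegree_lt (show d < d + 1 + 1 by omega), zero_mul, mul_zero,
    sub_zero, add_zero] at hcoeff
  exact mul_right_cancel₀ (leadingCoeff_ne_zero.2 hP) hcoeff

theorem exists_eq_C_mul_pow [CharZero K] (hne : t₀ ≠ t₁) {k : ℕ}
    (h : SolvesPowerEq t₀ t₁ (2 * k) P) :
    ∃ a : K, P = C a * ((X - C t₀) * (X - C t₁)) ^ k := by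
  induction k generalizing P with
  | zero =>
    have hder : derivative P = 0 := by
      simpa [SolvesPowerEq, X_sub_C_ne_zero] using h
    exact ⟨P.coeff 0, by rw [pow_zero, mul_one]; exact eq_C_of_derivative_eq_zero hder⟩
  | succ k ih =>
    obtain ⟨R, rfl⟩ := h.dvd hne (by norm_cast)
    obtain ⟨a, rfl⟩ := ih (by convert h.of_mul using 1; push_cast; ring)
    exact ⟨a, by ring⟩

theorem eq_zero_of_odd [CharZero K] (hne : t₀ ≠ t₁) {k : ℕ}
    (h : SolvesPowerEq t₀ t₁ (2 * k + 1) P) : P = 0 := by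
  induction k generalizing P with
  | zero =>
    obtain ⟨R, rfl⟩ := h.dvd hne (by simp)
    have hR : SolvesPowerEq t₀ t₁ (-1) R := by convert h.of_mul using 1; push_cast; ring
    suffices R = 0 by rw [this, mul_zero]
    by_contra hR0
    exact Nat.cast_add_one_ne_zero R.natDegree (by rw [hR.natDegree_eq hR0]; ring)
  | succ k ih =>
    obtain ⟨R, rfl⟩ := h.dvd hne (by norm_cast)
    rw [ih (P := R) (by convert h.of_mul using 1; push_cast; ring), mul_zero]

end SolvesPowerEq

end Polynomial

theorem stmt14_general {K : Type*} [Field K] [CharZero K] (t₀ t₁ : K) (hne : t₀ ≠ t₁)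
    (m : ℕ) (P : Polynomial K)
    (hP : (X - C t₀) * (X - C t₁) * derivative P =
      C (m : K) * ((X - C ((t₀ + t₁) / 2)) * P)) :
    (Even m → ∃ c : K, P = C c * ((X - C t₀) * (X - C t₁)) ^ (m / 2)) ∧
    (Odd m → P = 0) := by
  have h : SolvesPowerEq t₀ t₁ m P := hP
  constructor
  · rintro ⟨k, rfl⟩
    rw [← two_mul, Nat.mul_div_cancel_left k two_pos]
    exact SolvesPowerEq.exists_eq_C_mul_pow hne (by simpa [two_mul] using h)
  · rintro ⟨k, rfl⟩
    exact SolvesPowerEq.eq_zero_of_odd hne (by simpa using h)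

/-- Kernel of the operator `P ↦ (X−t₀)(X−t₁)P′ − m(X−(t₀+t₁)/2)P` on `K[X]` (char 0,
`t₀ ≠ t₁`): if `m` is even every solution of `(X−t₀)(X−t₁)P′ = m(X−(t₀+t₁)/2)P` is a
scalar multiple of `((X−t₀)(X−t₁))^{m/2}`, and if `m` is odd the only solution is `0`. -/
theorem stmt14 {K : Type*} [Field K] [CharZero K] (t₀ t₁ : K) (hne : t₀ ≠ t₁)
    (m : ℕ) (hm : 1 ≤ m) (P : Polynomial K)
    (hP : (X - C t₀) * (X - C t₁) * derivative P =
      C (m : K) * ((X - C ((t₀ + t₁) / 2)) * P)) :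
    (Even m → ∃ c : K, P = C c * ((X - C t₀) * (X - C t₁)) ^ (m / 2)) ∧
    (Odd m → P = 0) :=
  stmt14_general t₀ t₁ hne m P hP
end

section
/- For every real a > 0, the integral ∫ from (a−1)² to (a+1)² of √((τ − (a−1)²)·((a+1)² − τ))/(2τ) dτ equals π·(min(a,1))². -/
open Real MeasureTheory intervalIntegral Set

private lemma keyA (α β : ℝ) (h0 : 0 < α) (hab : α < β) :
    ∫ τ in α..β, Real.sqrt ((τ - α) * (β - τ)) / (2 * τ)
      = Real.pi * ((α + β) / 2 - Real.sqrt (α * β)) / 2 := by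
  have hβ : 0 < β := h0.trans hab
  have hd : 0 < β - α := by linarith
  have hABpos : 0 < α * β := mul_pos h0 hβ
  set G : ℝ → ℝ := fun τ =>
    (Real.sqrt ((τ - α) * (β - τ))
      + (α + β) / 2 * Real.arcsin ((2 * τ - α - β) / (β - α))
      - Real.sqrt (α * β) * Real.arcsin (((α + β) * τ - 2 * (α * β)) / ((β - α) * τ))) / 2
    with hGdef
  have hcont : ContinuousOn G (Icc α β) := by
    apply ContinuousOn.div_const
    apply ContinuousOn.sub
    · apply ContinuousOn.add
      · exact (((continuousOn_id.sub continuousOn_const).mul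
          (continuousOn_const.sub continuousOn_id))).sqrt
      · apply continuousOn_const.mul
        exact Real.continuous_arcsin.comp_continuousOn (by fun_prop)
    · apply continuousOn_const.mul
      apply Real.continuous_arcsin.comp_continuousOn
      apply ContinuousOn.div (by fun_prop) (by fun_prop)
      intro x hx
      have : 0 < x := lt_of_lt_of_le h0 hx.1
      positivity
  have hderiv : ∀ τ ∈ Ioo α β,
      HasDerivAt G (Real.sqrt ((τ - α) * (β - τ)) / (2 * τ)) τ := by
    intro τ hτ
    obtain ⟨hτα, hτβ⟩ := hτ
    have hτ0 : 0 < τ := h0.trans hτα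
    have hR : 0 < (τ - α) * (β - τ) := mul_pos (by linarith) (by linarith)
    have hRs : Real.sqrt ((τ - α) * (β - τ)) ^ 2 = (τ - α) * (β - τ) :=
      Real.sq_sqrt hR.le
    have hABs : Real.sqrt (α * β) ^ 2 = α * β := Real.sq_sqrt hABpos.le
    have hsR : 0 < Real.sqrt ((τ - α) * (β - τ)) := Real.sqrt_pos.mpr hR
    have hsAB : 0 < Real.sqrt (α * β) := Real.sqrt_pos.mpr hABpos
    -- first term
    have h1 : HasDerivAt (fun t => (t - α) * (β - t))
        (1 * (β - τ) + (τ - α) * (-1)) τ :=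
      ((hasDerivAt_id τ).sub_const α).mul ((hasDerivAt_id τ).const_sub β)
    have hsq : HasDerivAt (fun t => Real.sqrt ((t - α) * (β - t)))
        ((1 * (β - τ) + (τ - α) * (-1)) / (2 * Real.sqrt ((τ - α) * (β - τ)))) τ :=
      h1.sqrt hR.ne'
    -- second term
    have h2 : HasDerivAt (fun t => (2 * t - α - β) / (β - α)) ((2 * 1) / (β - α)) τ :=
      ((((hasDerivAt_id τ).const_mul 2).sub_const α).sub_const β).div_const (β - α)
    have e1 : (2 * τ - α - β) / (β - α) ≠ 1 := by
      intro h
      have := (div_eq_one_iff_eq hd.ne').mp h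
      linarith
    have e1' : (2 * τ - α - β) / (β - α) ≠ -1 := by
      intro h
      have := (div_eq_iff hd.ne').mp h
      nlinarith
    have harc1 : HasDerivAt (fun t => Real.arcsin ((2 * t - α - β) / (β - α)))
        ((1 / Real.sqrt (1 - ((2 * τ - α - β) / (β - α)) ^ 2)) * ((2 * 1) / (β - α))) τ :=
      (Real.hasDerivAt_arcsin e1' e1).comp τ h2 (h₂ := Real.arcsin)
    -- third term
    have hden : (β - α) * τ ≠ 0 := (mul_pos hd hτ0).ne'
    have h3 : HasDerivAt (fun t => ((α + β) * t - 2 * (α * β)) / ((β - α) * t))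
        ((((α + β) * 1) * ((β - α) * τ) - ((α + β) * τ - 2 * (α * β)) * ((β - α) * 1))
          / ((β - α) * τ) ^ 2) τ :=
      (((hasDerivAt_id τ).const_mul (α + β)).sub_const (2 * (α * β))).div
        ((hasDerivAt_id τ).const_mul (β - α)) hden
    have e2 : ((α + β) * τ - 2 * (α * β)) / ((β - α) * τ) ≠ 1 := by
      intro h
      have := (div_eq_one_iff_eq hden).mp h
      nlinarith [mul_pos h0 (show (0:ℝ) < β - τ by linarith)]
    have e2' : ((α + β) * τ - 2 * (α * β)) / ((β - α) * τ) ≠ -1 := by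
      intro h
      have := (div_eq_iff hden).mp h
      nlinarith [mul_pos hβ (show (0:ℝ) < τ - α by linarith)]
    have harc2 : HasDerivAt
        (fun t => Real.arcsin (((α + β) * t - 2 * (α * β)) / ((β - α) * t)))
        ((1 / Real.sqrt (1 - (((α + β) * τ - 2 * (α * β)) / ((β - α) * τ)) ^ 2)) *
          ((((α + β) * 1) * ((β - α) * τ) - ((α + β) * τ - 2 * (α * β)) * ((β - α) * 1))
            / ((β - α) * τ) ^ 2)) τ :=
      (Real.hasDerivAt_arcsin e2' e2).comp τ h3 (h₂ := Real.arcsin)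
    -- simplify the square roots
    have s1 : Real.sqrt (1 - ((2 * τ - α - β) / (β - α)) ^ 2)
        = 2 * Real.sqrt ((τ - α) * (β - τ)) / (β - α) := by
      have q1 : 1 - ((2 * τ - α - β) / (β - α)) ^ 2
          = (2 * Real.sqrt ((τ - α) * (β - τ))) ^ 2 / (β - α) ^ 2 := by
        rw [mul_pow, hRs]; field_simp [hd.ne']; ring
      rw [q1, ← div_pow, Real.sqrt_sq (by positivity)]
    have s2 : Real.sqrt (1 - (((α + β) * τ - 2 * (α * β)) / ((β - α) * τ)) ^ 2)
        = 2 * Real.sqrt (α * β) * Real.sqrt ((τ - α) * (β - τ)) / ((β - α) * τ) := by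
      have q2 : 1 - (((α + β) * τ - 2 * (α * β)) / ((β - α) * τ)) ^ 2
          = (2 * Real.sqrt (α * β) * Real.sqrt ((τ - α) * (β - τ))) ^ 2 / ((β - α) * τ) ^ 2 := by
        rw [mul_pow, mul_pow, hRs, hABs]; field_simp [hd.ne', hτ0.ne']; ring
      rw [q2, ← div_pow, Real.sqrt_sq (by positivity)]
    have hG' : HasDerivAt G
        (((1 * (β - τ) + (τ - α) * (-1)) / (2 * Real.sqrt ((τ - α) * (β - τ)))
          + (α + β) / 2 *
            ((1 / Real.sqrt (1 - ((2 * τ - α - β) / (β - α)) ^ 2)) * ((2 * 1) / (β - α)))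
          - Real.sqrt (α * β) *
            ((1 / Real.sqrt (1 - (((α + β) * τ - 2 * (α * β)) / ((β - α) * τ)) ^ 2)) *
              ((((α + β) * 1) * ((β - α) * τ) - ((α + β) * τ - 2 * (α * β)) * ((β - α) * 1))
                / ((β - α) * τ) ^ 2))) / 2) τ := by
      exact ((hsq.add (harc1.const_mul ((α + β) / 2))).sub
        (harc2.const_mul (Real.sqrt (α * β)))).div_const 2
    convert hG' using 1
    rw [s1, s2]
    have hsRne := hsR.ne'
    have hsABne := hsAB.ne'
    generalize hg1 : Real.sqrt ((τ - α) * (β - τ)) = sR at hRs hsRne ⊢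
    generalize hg2 : Real.sqrt (α * β) = sAB at hABs hsABne ⊢
    field_simp
    linear_combination 2 * hRs
  have hint : IntervalIntegrable (fun τ => Real.sqrt ((τ - α) * (β - τ)) / (2 * τ))
      volume α β := by
    apply ContinuousOn.intervalIntegrable
    apply ContinuousOn.div (by fun_prop) (by fun_prop)
    intro x hx
    rw [uIcc_of_le hab.le] at hx
    have : 0 < x := lt_of_lt_of_le h0 hx.1
    positivity
  rw [integral_eq_sub_of_hasDerivAt_of_le hab.le hcont hderiv hint]
  have hb1 : (2 * β - α - β) / (β - α) = 1 := by rw [div_eq_one_iff_eq hd.ne']; ring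
  have hb2 : ((α + β) * β - 2 * (α * β)) / ((β - α) * β) = 1 := by
    rw [div_eq_one_iff_eq (mul_pos hd hβ).ne']; ring
  have ha1 : (2 * α - α - β) / (β - α) = -1 := by
    rw [div_eq_iff hd.ne']; ring
  have ha2 : ((α + β) * α - 2 * (α * β)) / ((β - α) * α) = -1 := by
    rw [div_eq_iff (mul_pos hd h0).ne']; ring
  simp only [hGdef, hb1, hb2, ha1, ha2, Real.arcsin_one, Real.arcsin_neg_one]
  rw [show (β - α) * (β - β) = 0 by ring, show (α - α) * (β - α) = 0 by ring]
  norm_num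
  ring

private lemma keyB :
    ∫ τ in (0:ℝ)..4, Real.sqrt (τ * (4 - τ)) / (2 * τ) = Real.pi := by
  set G : ℝ → ℝ := fun τ =>
    (Real.sqrt (τ * (4 - τ)) + 2 * Real.arcsin ((τ - 2) / 2)) / 2 with hGdef
  have hcont : ContinuousOn G (Icc 0 4) := by
    apply ContinuousOn.div_const
    apply ContinuousOn.add
    · exact (continuousOn_id.mul (continuousOn_const.sub continuousOn_id)).sqrt
    · exact continuousOn_const.mul (Real.continuous_arcsin.comp_continuousOn (by fun_prop))
  have hderiv : ∀ τ ∈ Ioo (0:ℝ) 4,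
      HasDerivAt G (Real.sqrt (τ * (4 - τ)) / (2 * τ)) τ := by
    intro τ hτ
    obtain ⟨hτ0, hτ4⟩ := hτ
    have hR : 0 < τ * (4 - τ) := mul_pos hτ0 (by linarith)
    have hRs : Real.sqrt (τ * (4 - τ)) ^ 2 = τ * (4 - τ) := Real.sq_sqrt hR.le
    have hsR : 0 < Real.sqrt (τ * (4 - τ)) := Real.sqrt_pos.mpr hR
    have h1 : HasDerivAt (fun t => t * (4 - t)) (1 * (4 - τ) + τ * (-1)) τ :=
      (hasDerivAt_id τ).mul ((hasDerivAt_id τ).const_sub 4)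
    have hsq : HasDerivAt (fun t => Real.sqrt (t * (4 - t)))
        ((1 * (4 - τ) + τ * (-1)) / (2 * Real.sqrt (τ * (4 - τ)))) τ := h1.sqrt hR.ne'
    have h2 : HasDerivAt (fun t : ℝ => (t - 2) / 2) (1 / 2) τ :=
      ((hasDerivAt_id τ).sub_const 2).div_const 2
    have e1 : (τ - 2) / 2 ≠ 1 := by
      intro h; have := (div_eq_one_iff_eq (two_ne_zero)).mp h; linarith
    have e1' : (τ - 2) / 2 ≠ -1 := by
      intro h; have := (div_eq_iff (two_ne_zero)).mp h; linarith
    have harc : HasDerivAt (fun t => Real.arcsin ((t - 2) / 2))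
        ((1 / Real.sqrt (1 - ((τ - 2) / 2) ^ 2)) * (1 / 2)) τ :=
      (Real.hasDerivAt_arcsin e1' e1).comp τ h2 (h₂ := Real.arcsin)
    have s1 : Real.sqrt (1 - ((τ - 2) / 2) ^ 2) = Real.sqrt (τ * (4 - τ)) / 2 := by
      have q1 : 1 - ((τ - 2) / 2) ^ 2 = Real.sqrt (τ * (4 - τ)) ^ 2 / 2 ^ 2 := by
        rw [hRs]; ring
      rw [q1, ← div_pow, Real.sqrt_sq (by positivity)]
    have hG' : HasDerivAt G
        (((1 * (4 - τ) + τ * (-1)) / (2 * Real.sqrt (τ * (4 - τ)))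
          + 2 * ((1 / Real.sqrt (1 - ((τ - 2) / 2) ^ 2)) * (1 / 2))) / 2) τ :=
      (hsq.add (harc.const_mul 2)).div_const 2
    convert hG' using 1
    rw [s1]
    have hsRne := hsR.ne'
    generalize hg1 : Real.sqrt (τ * (4 - τ)) = sR at hRs hsRne ⊢
    field_simp
    linear_combination 2 * hRs
  have hint : IntervalIntegrable (fun τ => Real.sqrt (τ * (4 - τ)) / (2 * τ))
      volume 0 4 := by
    have hb : IntervalIntegrable (fun x : ℝ => x ^ (-(1:ℝ)/2)) volume 0 4 :=
      intervalIntegrable_rpow' (by norm_num)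
    apply hb.mono_fun
    · apply (Measurable.aestronglyMeasurable ?_).restrict
      fun_prop
    · rw [Filter.EventuallyLE, ae_restrict_iff' measurableSet_uIoc]
      apply Filter.Eventually.of_forall
      intro x hx
      rw [Set.uIoc_of_le (by norm_num : (0:ℝ) ≤ 4)] at hx
      obtain ⟨hx0, hx4⟩ := hx
      have h1 : Real.sqrt (x * (4 - x)) ≤ 2 * Real.sqrt x := by
        rw [show 2 * Real.sqrt x = Real.sqrt (4 * x) by
          rw [show (4:ℝ) * x = 2 ^ 2 * x by norm_num, Real.sqrt_mul (by positivity) x,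
            Real.sqrt_sq (by norm_num : (0:ℝ) ≤ 2)]]
        exact Real.sqrt_le_sqrt (by nlinarith)
      have h2 : x ^ (-(1:ℝ)/2) = 1 / Real.sqrt x := by
        rw [Real.rpow_def_of_pos hx0, Real.sqrt_eq_rpow, Real.rpow_def_of_pos hx0,
          one_div, ← Real.exp_neg]
        ring_nf
      have hsx : 0 < Real.sqrt x := Real.sqrt_pos.mpr hx0
      simp only [Real.norm_eq_abs]
      rw [abs_of_nonneg (by positivity), abs_of_nonneg (by positivity), h2]
      rw [div_le_div_iff₀ (by positivity) hsx]
      calc Real.sqrt (x * (4 - x)) * Real.sqrt x ≤ 2 * Real.sqrt x * Real.sqrt x := by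
            apply mul_le_mul_of_nonneg_right h1 hsx.le
        _ = 2 * x := by rw [mul_assoc, Real.mul_self_sqrt hx0.le]
        _ ≤ 1 * (2 * x) := by linarith
  rw [integral_eq_sub_of_hasDerivAt_of_le (by norm_num) hcont hderiv hint]
  simp only [hGdef]
  norm_num [Real.arcsin_one, show ((0:ℝ) - 2) / 2 = -1 by norm_num, Real.arcsin_neg_one]
  ring

/-- The integral `∫_{(a−1)²}^{(a+1)²} √((τ−(a−1)²)((a+1)²−τ))/(2τ) dτ = π·(min(a,1))²`
for every `a > 0`. -/
theorem stmt17 (a : ℝ) (ha : 0 < a) :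
    ∫ τ in ((a - 1) ^ 2)..((a + 1) ^ 2),
        Real.sqrt ((τ - (a - 1) ^ 2) * ((a + 1) ^ 2 - τ)) / (2 * τ) =
      Real.pi * (min a 1) ^ 2 := by
  rcases eq_or_ne a 1 with rfl | hne
  · norm_num
    rw [show ∫ τ in (0:ℝ)..4, Real.sqrt (τ * (4 - τ)) / (2 * τ)
        = Real.pi from keyB]
  · have hd : a - 1 ≠ 0 := sub_ne_zero.mpr hne
    have h0 : 0 < (a - 1) ^ 2 := by positivity
    have hab : (a - 1) ^ 2 < (a + 1) ^ 2 := by nlinarith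
    rw [keyA _ _ h0 hab]
    have h2 : Real.sqrt ((a - 1) ^ 2 * (a + 1) ^ 2) = |a ^ 2 - 1| := by
      rw [show (a - 1) ^ 2 * (a + 1) ^ 2 = (a ^ 2 - 1) ^ 2 by ring, Real.sqrt_sq_eq_abs]
    rw [h2]
    rcases lt_or_gt_of_ne hne with h | h
    · rw [abs_of_neg (by nlinarith), min_eq_left h.le]; ring
    · rw [abs_of_pos (by nlinarith), min_eq_right h.le]; ring
end
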